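/- arXiv:2307.12414 — 7 statements merged into one kernel-verified Lean document; each statement's English description precedes it below -/
import Mathlib

section
/- Under Assumption A there exist a countable dense subset 𝔓̃ ⊆ 𝔓 and a measurable set A ⊆ Ω with 𝒫(A) = 1 such that for all p̃ ∈ 𝔓̃ and all ω ∈ A: (i) F_n(ω, p̃) → F(p̃) and Ḟ_n(ω, p̃) → Ḟ(p̃) as n → ∞, where Ḟ_n(ω,p) := (1/n)Σ_{i=1}^n ρ̇(X_i(ω),p) and Ḟ(p) := E[ρ̇(X,p)]; and (ii) for every p ∈ 𝔓 with d(p,p̃) < δ/2 and every sequence (p_n) in 𝔓 with p_n → p, F(p̃) − h(d(p̃,p))·Ḟ(p̃) ≤ liminf_n F_n(ω,p_n) ≤ limsup_n F_n(ω,p_n) ≤ F(p̃) + h(d(p̃,p))·Ḟ(p̃). -/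
open scoped BigOperators
open MeasureTheory Filter

/-- pointwise strong laws on a countable dense subset of the parameter space,
together with liminf/limsup sandwich bounds for the sample Fréchet functions along
converging sequences, under Assumption A. -/
theorem frechet_dense_pointwise
    {Ω : Type*} [MeasurableSpace Ω] (Pm : Measure Ω) [IsProbabilityMeasure Pm]
    {Q : Type*} [TopologicalSpace Q] [MeasurableSpace Q] [BorelSpace Q]
    {P : Type*} [MetricSpace P] [TopologicalSpace.SeparableSpace P]
    -- i.i.d. data X₁, X₂, …
    (X : ℕ → Ω → Q) (hXmeas : ∀ i, Measurable (X i))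
    (hXindep : ProbabilityTheory.iIndepFun X Pm)
    (hXident : ∀ i, Measure.map (X i) Pm = Measure.map (X 0) Pm)
    -- the loss ρ and Assumption A
    (ρ ρdot : Q → P → ℝ)
    (hρcont : ∀ q, Continuous (ρ q)) (hρmeas : ∀ p, Measurable fun q => ρ q p)
    (hρdotcont : ∀ q, Continuous (ρdot q)) (hρdotmeas : ∀ p, Measurable fun q => ρdot q p)
    (hρdotnn : ∀ q p, 0 ≤ ρdot q p)
    (hρdotint : ∀ p, Integrable (fun ω => ρdot (X 0 ω) p) Pm)
    (hρint : ∀ p, Integrable (fun ω => ρ (X 0 ω) p) Pm)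
    (h : ℝ → ℝ) (hhnn : ∀ t, 0 ≤ h t) (hhcont : Continuous h) (hh0 : h 0 = 0)
    (δ : ℝ) (hδ : 0 < δ)
    (hmod : ∀ q (p p' : P), dist p p' < δ → |ρ q p - ρ q p'| ≤ ρdot q p * h (dist p p')) :
    ∃ Pt : Set P, Pt.Countable ∧ Dense Pt ∧
      ∃ A : Set Ω, MeasurableSet A ∧ Pm A = 1 ∧
        ∀ pt ∈ Pt, ∀ ω ∈ A,
          -- (i) strong laws of large numbers at pt
          (Tendsto (fun n : ℕ => (1 / (n : ℝ)) * ∑ i ∈ Finset.range n, ρ (X i ω) pt)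
              atTop (nhds (∫ ω', ρ (X 0 ω') pt ∂Pm)) ∧
            Tendsto (fun n : ℕ => (1 / (n : ℝ)) * ∑ i ∈ Finset.range n, ρdot (X i ω) pt)
              atTop (nhds (∫ ω', ρdot (X 0 ω') pt ∂Pm))) ∧
          -- (ii) sandwich bounds along converging sequences near pt
          (∀ p : P, dist p pt < δ / 2 → ∀ pn : ℕ → P, Tendsto pn atTop (nhds p) →
            ((∫ ω', ρ (X 0 ω') pt ∂Pm) - h (dist pt p) * (∫ ω', ρdot (X 0 ω') pt ∂Pm) ≤
                liminf (fun n : ℕ => (1 / (n : ℝ)) * ∑ i ∈ Finset.range n, ρ (X i ω) (pn n))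
                  atTop ∧
              liminf (fun n : ℕ => (1 / (n : ℝ)) * ∑ i ∈ Finset.range n, ρ (X i ω) (pn n))
                  atTop ≤
                limsup (fun n : ℕ => (1 / (n : ℝ)) * ∑ i ∈ Finset.range n, ρ (X i ω) (pn n))
                  atTop ∧
              limsup (fun n : ℕ => (1 / (n : ℝ)) * ∑ i ∈ Finset.range n, ρ (X i ω) (pn n))
                  atTop ≤
                (∫ ω', ρ (X 0 ω') pt ∂Pm) + h (dist pt p) * (∫ ω', ρdot (X 0 ω') pt ∂Pm))) := by
  classical
  -- Strong law for a generic loss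
  have slln : ∀ (g : Q → P → ℝ), (∀ p, Measurable fun q => g q p) →
      (∀ p, Integrable (fun ω => g (X 0 ω) p) Pm) → ∀ pt : P,
      ∀ᵐ ω ∂Pm, Tendsto (fun n : ℕ => (1 / (n : ℝ)) * ∑ i ∈ Finset.range n, g (X i ω) pt)
        atTop (nhds (∫ ω', g (X 0 ω') pt ∂Pm)) := by
    intro g gmeas gint pt
    have hindep : Pairwise (Function.onFun (ProbabilityTheory.IndepFun · · Pm)
        fun i ω => g (X i ω) pt) := fun i j hij =>
      (hXindep.indepFun hij).comp (gmeas pt) (gmeas pt)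
    have hident : ∀ i, ProbabilityTheory.IdentDistrib (fun ω => g (X i ω) pt)
        (fun ω => g (X 0 ω) pt) Pm Pm := fun i =>
      ProbabilityTheory.IdentDistrib.comp
        ⟨(hXmeas i).aemeasurable, (hXmeas 0).aemeasurable, hXident i⟩ (gmeas pt)
    filter_upwards [ProbabilityTheory.strong_law_ae_real (fun i ω => g (X i ω) pt)
      (gint pt) hindep hident] with ω hω
    simpa [div_eq_mul_inv, one_div, mul_comm] using hω
  obtain ⟨Pt, hPtc, hPtd⟩ := TopologicalSpace.exists_countable_dense P
  have hae : ∀ᵐ ω ∂Pm, ∀ pt ∈ Pt,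
      (Tendsto (fun n : ℕ => (1 / (n : ℝ)) * ∑ i ∈ Finset.range n, ρ (X i ω) pt)
        atTop (nhds (∫ ω', ρ (X 0 ω') pt ∂Pm)) ∧
       Tendsto (fun n : ℕ => (1 / (n : ℝ)) * ∑ i ∈ Finset.range n, ρdot (X i ω) pt)
        atTop (nhds (∫ ω', ρdot (X 0 ω') pt ∂Pm))) :=
    (ae_ball_iff hPtc).2 fun pt _ =>
      ((slln ρ hρmeas hρint pt).and (slln ρdot hρdotmeas hρdotint pt))
  obtain ⟨N, hTN, hNm, hN0⟩ := exists_measurable_superset_of_null (ae_iff.1 hae)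
  refine ⟨Pt, hPtc, hPtd, Nᶜ, hNm.compl, ?_, ?_⟩
  · rw [measure_compl hNm (measure_ne_top Pm N), hN0, measure_univ, tsub_zero]
  intro pt hpt ω hω
  have hωgood : ∀ pt ∈ Pt,
      (Tendsto (fun n : ℕ => (1 / (n : ℝ)) * ∑ i ∈ Finset.range n, ρ (X i ω) pt)
        atTop (nhds (∫ ω', ρ (X 0 ω') pt ∂Pm)) ∧
       Tendsto (fun n : ℕ => (1 / (n : ℝ)) * ∑ i ∈ Finset.range n, ρdot (X i ω) pt)
        atTop (nhds (∫ ω', ρdot (X 0 ω') pt ∂Pm))) := by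
    by_contra hbad
    exact hω (hTN hbad)
  obtain ⟨hF, hG⟩ := hωgood pt hpt
  refine ⟨⟨hF, hG⟩, ?_⟩
  intro p hp pn hpn
  set s : ℕ → ℝ := fun n => (1 / (n : ℝ)) * ∑ i ∈ Finset.range n, ρ (X i ω) (pn n) with hs
  set Fn : ℕ → ℝ := fun n => (1 / (n : ℝ)) * ∑ i ∈ Finset.range n, ρ (X i ω) pt with hFn
  set Gn : ℕ → ℝ := fun n => (1 / (n : ℝ)) * ∑ i ∈ Finset.range n, ρdot (X i ω) pt with hGn
  set t : ℕ → ℝ := fun n => h (dist pt (pn n)) with htdef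
  have hd : Tendsto (fun n => dist pt (pn n)) atTop (nhds (dist pt p)) :=
    (tendsto_const_nhds : Tendsto (fun _ : ℕ => pt) atTop (nhds pt)).dist hpn
  have ht : Tendsto t atTop (nhds (h (dist pt p))) := (hhcont.tendsto _).comp hd
  have hltδ : dist pt p < δ := by
    rw [dist_comm]; linarith
  have hev : ∀ᶠ n in atTop, dist pt (pn n) < δ := hd.eventually_lt_const hltδ
  have hbound : ∀ᶠ n in atTop, |s n - Fn n| ≤ Gn n * t n := by
    filter_upwards [hev] with n hn
    have h1 : s n - Fn n = (1 / (n : ℝ)) *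
        ∑ i ∈ Finset.range n, (ρ (X i ω) (pn n) - ρ (X i ω) pt) := by
      rw [Finset.sum_sub_distrib, mul_sub]
    rw [h1, abs_mul, abs_of_nonneg (by positivity : (0:ℝ) ≤ 1 / (n:ℝ))]
    have h2 : |∑ i ∈ Finset.range n, (ρ (X i ω) (pn n) - ρ (X i ω) pt)| ≤
        ∑ i ∈ Finset.range n, ρdot (X i ω) pt * t n := by
      refine (Finset.abs_sum_le_sum_abs _ _).trans (Finset.sum_le_sum fun i _ => ?_)
      rw [abs_sub_comm]
      exact hmod (X i ω) pt (pn n) hn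
    calc (1 / (n : ℝ)) * |∑ i ∈ Finset.range n, (ρ (X i ω) (pn n) - ρ (X i ω) pt)|
        ≤ (1 / (n : ℝ)) * ∑ i ∈ Finset.range n, ρdot (X i ω) pt * t n := by
          exact mul_le_mul_of_nonneg_left h2 (by positivity)
      _ = Gn n * t n := by rw [← Finset.sum_mul, ← mul_assoc]
  have hGt : Tendsto (fun n => Gn n * t n) atTop
      (nhds ((∫ ω', ρdot (X 0 ω') pt ∂Pm) * h (dist pt p))) := hG.mul ht
  have hu : Tendsto (fun n => Fn n + Gn n * t n) atTop
      (nhds ((∫ ω', ρ (X 0 ω') pt ∂Pm) + (∫ ω', ρdot (X 0 ω') pt ∂Pm) * h (dist pt p))) :=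
    hF.add hGt
  have hl : Tendsto (fun n => Fn n - Gn n * t n) atTop
      (nhds ((∫ ω', ρ (X 0 ω') pt ∂Pm) - (∫ ω', ρdot (X 0 ω') pt ∂Pm) * h (dist pt p))) :=
    hF.sub hGt
  have hsle : s ≤ᶠ[atTop] fun n => Fn n + Gn n * t n := by
    filter_upwards [hbound] with n hn
    have := abs_le.1 hn
    linarith [this.2]
  have hles : (fun n => Fn n - Gn n * t n) ≤ᶠ[atTop] s := by
    filter_upwards [hbound] with n hn
    have := abs_le.1 hn
    linarith [this.1]
  have hbdd_le : IsBoundedUnder (· ≤ ·) atTop s := hu.isBoundedUnder_le.mono_le hsle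
  have hbdd_ge : IsBoundedUnder (· ≥ ·) atTop s := hl.isBoundedUnder_ge.mono_ge hles
  have hlimsup : limsup s atTop ≤
      (∫ ω', ρ (X 0 ω') pt ∂Pm) + h (dist pt p) * (∫ ω', ρdot (X 0 ω') pt ∂Pm) := by
    rw [mul_comm (h (dist pt p))]
    calc limsup s atTop ≤ limsup (fun n => Fn n + Gn n * t n) atTop :=
          limsup_le_limsup hsle hbdd_ge.isCoboundedUnder_le hu.isBoundedUnder_le
      _ = _ := hu.limsup_eq
  have hliminf : (∫ ω', ρ (X 0 ω') pt ∂Pm) - h (dist pt p) * (∫ ω', ρdot (X 0 ω') pt ∂Pm)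
      ≤ liminf s atTop := by
    rw [mul_comm (h (dist pt p))]
    calc (∫ ω', ρ (X 0 ω') pt ∂Pm) - (∫ ω', ρdot (X 0 ω') pt ∂Pm) * h (dist pt p)
        = liminf (fun n => Fn n - Gn n * t n) atTop := hl.liminf_eq.symm
      _ ≤ liminf s atTop :=
          liminf_le_liminf hles hl.isBoundedUnder_ge hbdd_le.isCoboundedUnder_ge
  exact ⟨hliminf, liminf_le_limsup hbdd_le hbdd_ge, hlimsup⟩
end

section
/- (Ziezold strong consistency for generalized Fréchet means.) Under Assumption A, almost surely for all ω the following holds: ⋂_{n=1}^∞ closure(⋃_{k=n}^∞ E_k(ω)) ⊆ E, where E_k(ω) := {p ∈ 𝔓 : F_k(ω,p) = inf_{p'∈𝔓} F_k(ω,p')} is the set of sample Fréchet ρ-means and E := {p ∈ 𝔓 : F(p) = inf_{p'∈𝔓} F(p')} is the set of population Fréchet ρ-means. -/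
open scoped BigOperators
open MeasureTheory Filter
open scoped Topology

/-- Ziezold strong consistency for generalized Fréchet means under Assumption A:
almost surely, `⋂_{n≥1} closure (⋃_{k≥n} E_k(ω)) ⊆ E`. -/
theorem ziezold_strong_consistency
    {Ω : Type*} [MeasurableSpace Ω] (Pm : Measure Ω) [IsProbabilityMeasure Pm]
    {Q : Type*} [TopologicalSpace Q] [MeasurableSpace Q] [BorelSpace Q]
    {P : Type*} [MetricSpace P] [TopologicalSpace.SeparableSpace P]
    -- i.i.d. data X₁, X₂, …
    (X : ℕ → Ω → Q) (hXmeas : ∀ i, Measurable (X i))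
    (hXindep : ProbabilityTheory.iIndepFun X Pm)
    (hXident : ∀ i, Measure.map (X i) Pm = Measure.map (X 0) Pm)
    -- the loss ρ and Assumption A
    (ρ ρdot : Q → P → ℝ)
    (hρcont : ∀ q, Continuous (ρ q)) (hρmeas : ∀ p, Measurable fun q => ρ q p)
    (hρdotcont : ∀ q, Continuous (ρdot q)) (hρdotmeas : ∀ p, Measurable fun q => ρdot q p)
    (hρdotnn : ∀ q p, 0 ≤ ρdot q p)
    (hρdotint : ∀ p, Integrable (fun ω => ρdot (X 0 ω) p) Pm)
    (hρint : ∀ p, Integrable (fun ω => ρ (X 0 ω) p) Pm)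
    (h : ℝ → ℝ) (hhnn : ∀ t, 0 ≤ h t) (hhcont : Continuous h) (hh0 : h 0 = 0)
    (δ : ℝ) (hδ : 0 < δ)
    (hmod : ∀ q (p p' : P), dist p p' < δ → |ρ q p - ρ q p'| ≤ ρdot q p * h (dist p p'))
    -- sample and population Fréchet mean sets
    (Ek : ℕ → Ω → Set P)
    (hEk : ∀ k ω, Ek k ω =
      {p : P | ∀ p' : P, (1 / (k : ℝ)) * ∑ i ∈ Finset.range k, ρ (X i ω) p ≤
        (1 / (k : ℝ)) * ∑ i ∈ Finset.range k, ρ (X i ω) p'})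
    (E : Set P)
    (hE : E = {p : P | ∀ p' : P, (∫ ω, ρ (X 0 ω) p ∂Pm) ≤ ∫ ω, ρ (X 0 ω) p' ∂Pm}) :
    ∀ᵐ ω ∂Pm, (⋂ n : ℕ, closure (⋃ k : ℕ, ⋃ _ : n + 1 ≤ k, Ek k ω)) ⊆ E := by
  rcases isEmpty_or_nonempty P with hP | hP
  · exact ae_of_all _ fun ω x hx => (IsEmpty.false x).elim
  -- dense sequence
  set d : ℕ → P := TopologicalSpace.denseSeq P with hd_def
  have hd : DenseRange d := TopologicalSpace.denseRange_denseSeq P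
  -- radii
  set r : ℕ → ℝ := fun b => 1 / ((b : ℝ) + 1) with hr_def
  have hrpos : ∀ b, 0 < r b := fun b => by positivity
  -- points enumerating the dense points of the ball B(d a, r b), padded with d a
  set e : ℕ → ℕ → ℕ → P := fun a b i => if dist (d i) (d a) < r b then d i else d a with he_def
  have he_mem : ∀ a b i, dist (e a b i) (d a) < r b := by
    intro a b i
    by_cases hc : dist (d i) (d a) < r b
    · simp only [he_def, if_pos hc]; exact hc
    · simp only [he_def, hc, if_false]
      simpa using hrpos b
  have he_self : ∀ a b, e a b a = d a := by
    intro a b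
    by_cases hc : dist (d a) (d a) < r b <;> simp [he_def, hc]
  -- the ball-infimum functions
  set M : ℕ → ℕ → Q → ℝ := fun a b q => ⨅ i, ρ q (e a b i) with hM_def
  -- constant bound on h over [0, r b]
  set C : ℕ → ℝ := fun b => sSup (h '' Set.Icc 0 (r b)) with hC_def
  have hCbdd : ∀ b, BddAbove (h '' Set.Icc 0 (r b)) :=
    fun b => (isCompact_Icc.image hhcont).bddAbove
  have hCnn : ∀ b, 0 ≤ C b := by
    intro b
    have h0mem : (0 : ℝ) ∈ h '' Set.Icc 0 (r b) :=
      ⟨0, ⟨le_refl 0, (hrpos b).le⟩, hh0⟩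
    exact le_csSup (hCbdd b) h0mem
  have hhleC : ∀ b t, 0 ≤ t → t ≤ r b → h t ≤ C b := by
    intro b t ht0 htr
    exact le_csSup (hCbdd b) ⟨t, ⟨ht0, htr⟩, rfl⟩
  -- lower bound for M on the ball (needs r b < δ)
  have hMlb : ∀ a b, r b < δ → ∀ q,
      ρ q (d a) - ρdot q (d a) * C b ≤ M a b q := by
    intro a b hb q
    refine le_ciInf fun i => ?_
    have hdist : dist (d a) (e a b i) < δ := by
      rw [dist_comm]; exact (he_mem a b i).trans hb
    have := hmod q (d a) (e a b i) hdist
    have h1 : ρ q (d a) - ρ q (e a b i) ≤ ρdot q (d a) * h (dist (d a) (e a b i)) :=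
      (le_abs_self _).trans this
    have h2 : h (dist (d a) (e a b i)) ≤ C b := by
      refine hhleC b _ dist_nonneg ?_
      rw [dist_comm]; exact (he_mem a b i).le
    have h3 : ρdot q (d a) * h (dist (d a) (e a b i)) ≤ ρdot q (d a) * C b :=
      mul_le_mul_of_nonneg_left h2 (hρdotnn _ _)
    linarith
  have hbddBelow : ∀ a b, r b < δ → ∀ q,
      BddBelow (Set.range fun i => ρ q (e a b i)) := by
    intro a b hb q
    refine ⟨ρ q (d a) - ρdot q (d a) * C b, ?_⟩
    rintro x ⟨i, rfl⟩
    have hdist : dist (d a) (e a b i) < δ := by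
      rw [dist_comm]; exact (he_mem a b i).trans hb
    have h1 : ρ q (d a) - ρ q (e a b i) ≤ ρdot q (d a) * h (dist (d a) (e a b i)) :=
      (le_abs_self _).trans (hmod q (d a) (e a b i) hdist)
    have h2 : h (dist (d a) (e a b i)) ≤ C b :=
      hhleC b _ dist_nonneg (by rw [dist_comm]; exact (he_mem a b i).le)
    have h3 : ρdot q (d a) * h (dist (d a) (e a b i)) ≤ ρdot q (d a) * C b :=
      mul_le_mul_of_nonneg_left h2 (hρdotnn _ _)
    linarith
  have hMle : ∀ a b, r b < δ → ∀ q i, M a b q ≤ ρ q (e a b i) :=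
    fun a b hb q i => ciInf_le (hbddBelow a b hb q) i
  have hMub : ∀ a b, r b < δ → ∀ q, M a b q ≤ ρ q (d a) := by
    intro a b hb q
    have := hMle a b hb q a
    rwa [he_self a b] at this
  -- M ≤ ρ(·, x) for any x in the ball, by density and continuity
  have hMlex : ∀ a b, r b < δ → ∀ q (x : P), dist x (d a) < r b → M a b q ≤ ρ q x := by
    intro a b hb q x hx
    refine le_of_forall_pos_le_add fun γ hγ => ?_
    obtain ⟨s, hs, hcont⟩ := Metric.continuous_iff.mp (hρcont q) x γ hγ
    have hs' : 0 < min s (r b - dist x (d a)) := lt_min hs (by linarith)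
    obtain ⟨i, hi⟩ := Metric.denseRange_iff.mp hd x _ hs'
    have hdix : dist (d i) x < s := by
      rw [dist_comm]; exact lt_of_lt_of_le hi (min_le_left _ _)
    have hdia : dist (d i) (d a) < r b := by
      have h1 : dist x (d i) < r b - dist x (d a) := lt_of_lt_of_le hi (min_le_right _ _)
      calc dist (d i) (d a) ≤ dist (d i) x + dist x (d a) := dist_triangle _ _ _
        _ < (r b - dist x (d a)) + dist x (d a) := by rw [dist_comm] at h1; linarith
        _ = r b := by ring
    have heq : e a b i = d i := by simp [he_def, hdia]
    have h1 : M a b q ≤ ρ q (d i) := by rw [← heq]; exact hMle a b hb q i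
    have h2 : |ρ q (d i) - ρ q x| < γ := by
      have := hcont (d i) hdix
      rwa [Real.dist_eq] at this
    have h3 : ρ q (d i) - ρ q x ≤ γ := (le_abs_self _).trans h2.le
    linarith
  -- measurability and integrability of M ∘ X i
  have hMmeas : ∀ a b, Measurable (M a b) :=
    fun a b => Measurable.iInf fun i => hρmeas (e a b i)
  have identX : ∀ i, ProbabilityTheory.IdentDistrib (X i) (X 0) Pm Pm :=
    fun i => ⟨(hXmeas i).aemeasurable, (hXmeas 0).aemeasurable, hXident i⟩
  have hMint : ∀ a b, r b < δ → Integrable (fun ω => M a b (X 0 ω)) Pm := by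
    intro a b hb
    have hgint : Integrable (fun ω => |ρ (X 0 ω) (d a)| + ρdot (X 0 ω) (d a) * C b) Pm :=
      ((hρint (d a)).abs).add ((hρdotint (d a)).mul_const (C b))
    refine Integrable.mono' hgint
      (((hMmeas a b).comp (hXmeas 0)).aestronglyMeasurable) (ae_of_all _ fun ω => ?_)
    rw [Real.norm_eq_abs, abs_le]
    constructor
    · have := hMlb a b hb (X 0 ω)
      have h1 : -|ρ (X 0 ω) (d a)| ≤ ρ (X 0 ω) (d a) := neg_abs_le _
      linarith
    · have := hMub a b hb (X 0 ω)
      have h1 : ρ (X 0 ω) (d a) ≤ |ρ (X 0 ω) (d a)| := le_abs_self _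
      have h2 : 0 ≤ ρdot (X 0 ω) (d a) * C b := mul_nonneg (hρdotnn _ _) (hCnn b)
      linarith
  -- SLLN for ρ(·, d a)
  have slln1 : ∀ a : ℕ, ∀ᵐ ω ∂Pm, Tendsto
      (fun k : ℕ => (k : ℝ)⁻¹ • ∑ i ∈ Finset.range k, ρ (X i ω) (d a)) atTop
      (𝓝 (∫ ω, ρ (X 0 ω) (d a) ∂Pm)) := by
    intro a
    exact ProbabilityTheory.strong_law_ae (fun i ω => ρ (X i ω) (d a)) (hρint (d a))
      (fun i j hij => (hXindep.indepFun hij).comp (hρmeas (d a)) (hρmeas (d a)))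
      (fun i => (identX i).comp (hρmeas (d a)))
  -- SLLN for M a b
  have slln2 : ∀ a b : ℕ, r b < δ → ∀ᵐ ω ∂Pm, Tendsto
      (fun k : ℕ => (k : ℝ)⁻¹ • ∑ i ∈ Finset.range k, M a b (X i ω)) atTop
      (𝓝 (∫ ω, M a b (X 0 ω) ∂Pm)) := by
    intro a b hb
    exact ProbabilityTheory.strong_law_ae (fun i ω => M a b (X i ω)) (hMint a b hb)
      (fun i j hij => (hXindep.indepFun hij).comp (hMmeas a b) (hMmeas a b))
      (fun i => (identX i).comp (hMmeas a b))
  -- the a.s. good event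
  have hae : ∀ᵐ ω ∂Pm,
      (∀ a : ℕ, Tendsto
        (fun k : ℕ => (k : ℝ)⁻¹ • ∑ i ∈ Finset.range k, ρ (X i ω) (d a)) atTop
        (𝓝 (∫ ω', ρ (X 0 ω') (d a) ∂Pm))) ∧
      (∀ a b : ℕ, r b < δ → Tendsto
        (fun k : ℕ => (k : ℝ)⁻¹ • ∑ i ∈ Finset.range k, M a b (X i ω)) atTop
        (𝓝 (∫ ω', M a b (X 0 ω') ∂Pm))) := by
    refine (ae_all_iff.2 slln1).and (ae_all_iff.2 fun a => ae_all_iff.2 fun b => ?_)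
    by_cases hb : r b < δ
    · exact (slln2 a b hb).mono fun ω H _ => H
    · exact ae_of_all _ fun ω hb' => absurd hb' hb
  filter_upwards [hae] with ω hω
  intro p hp
  rw [hE]
  intro p'
  refine le_of_forall_pos_le_add fun ε hε => ?_
  set Gp : ℝ := ∫ ω', ρdot (X 0 ω') p ∂Pm with hGp_def
  set Gp' : ℝ := ∫ ω', ρdot (X 0 ω') p' ∂Pm with hGp'_def
  have hGpnn : 0 ≤ Gp := integral_nonneg fun ω' => hρdotnn _ _
  have hGp'nn : 0 ≤ Gp' := integral_nonneg fun ω' => hρdotnn _ _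
  set B : ℝ := Gp + Gp' + 1 with hB_def
  have hBpos : 0 < B := by linarith
  set εh : ℝ := ε / (4 * B) with hεh_def
  have hεhpos : 0 < εh := by positivity
  -- modulus of continuity of h at 0
  obtain ⟨η, hηpos, hη⟩ := Metric.continuous_iff.mp hhcont 0 εh hεhpos
  have hhsmall : ∀ t : ℝ, 0 ≤ t → t < η → h t ≤ εh := by
    intro t ht0 htη
    have := hη t (by rwa [Real.dist_eq, sub_zero, abs_of_nonneg ht0])
    rw [hh0, Real.dist_eq, sub_zero, abs_of_nonneg (hhnn t)] at this
    exact this.le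
  set η' : ℝ := min η δ with hη'_def
  have hη'pos : 0 < η' := lt_min hηpos hδ
  -- upper anchor near p'
  obtain ⟨a', ha'⟩ := Metric.denseRange_iff.mp hd p' η' hη'pos
  have hupper : (∫ ω', ρ (X 0 ω') (d a') ∂Pm) ≤ (∫ ω', ρ (X 0 ω') p' ∂Pm) + εh * Gp' := by
    have hpt : ∀ q, ρ q (d a') ≤ ρ q p' + εh * ρdot q p' := by
      intro q
      have hdd : dist p' (d a') < δ := lt_of_lt_of_le ha' (min_le_right _ _)
      have h1 : ρ q (d a') - ρ q p' ≤ ρdot q p' * h (dist p' (d a')) := by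
        have := hmod q p' (d a') hdd
        have h2 : -(ρ q p' - ρ q (d a')) ≤ |ρ q p' - ρ q (d a')| := neg_le_abs _
        linarith [h2.trans this]
      have h3 : h (dist p' (d a')) ≤ εh :=
        hhsmall _ dist_nonneg (lt_of_lt_of_le ha' (min_le_left _ _))
      have h4 : ρdot q p' * h (dist p' (d a')) ≤ ρdot q p' * εh :=
        mul_le_mul_of_nonneg_left h3 (hρdotnn _ _)
      linarith
    calc (∫ ω', ρ (X 0 ω') (d a') ∂Pm)
        ≤ ∫ ω', (ρ (X 0 ω') p' + εh * ρdot (X 0 ω') p') ∂Pm := by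
          refine integral_mono (hρint _) ((hρint _).add ((hρdotint _).const_mul εh))
            fun ω' => hpt _
      _ = (∫ ω', ρ (X 0 ω') p' ∂Pm) + εh * Gp' := by
          rw [integral_add (hρint _) ((hρdotint _).const_mul εh), integral_const_mul]
  -- choose the ball around p
  obtain ⟨b, hb⟩ := exists_nat_one_div_lt (show (0:ℝ) < η' / 2 by linarith)
  have hrb : r b < η' / 2 := hb
  have hrbδ : r b < δ := by
    have : η' ≤ δ := min_le_right _ _
    linarith
  obtain ⟨a, ha⟩ := Metric.denseRange_iff.mp hd p (r b) (hrpos b)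
  -- lower bound: F p - εh * Gp ≤ ∫ M a b
  have hlower : (∫ ω', ρ (X 0 ω') p ∂Pm) - εh * Gp ≤ ∫ ω', M a b (X 0 ω') ∂Pm := by
    have hpt : ∀ q, ρ q p - εh * ρdot q p ≤ M a b q := by
      intro q
      refine le_ciInf fun i => ?_
      have hdpe : dist p (e a b i) < η' := by
        calc dist p (e a b i) ≤ dist p (d a) + dist (d a) (e a b i) := dist_triangle _ _ _
          _ < r b + r b := by
              rw [dist_comm (d a)]
              exact add_lt_add ha (he_mem a b i)
          _ < η' := by linarith
      have hdpeδ : dist p (e a b i) < δ := lt_of_lt_of_le hdpe (min_le_right _ _)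
      have h1 : ρ q p - ρ q (e a b i) ≤ ρdot q p * h (dist p (e a b i)) :=
        (le_abs_self _).trans (hmod q p (e a b i) hdpeδ)
      have h3 : h (dist p (e a b i)) ≤ εh :=
        hhsmall _ dist_nonneg (lt_of_lt_of_le hdpe (min_le_left _ _))
      have h4 : ρdot q p * h (dist p (e a b i)) ≤ ρdot q p * εh :=
        mul_le_mul_of_nonneg_left h3 (hρdotnn _ _)
      linarith
    have hmono : (∫ ω', (ρ (X 0 ω') p - εh * ρdot (X 0 ω') p) ∂Pm) ≤
        ∫ ω', M a b (X 0 ω') ∂Pm :=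
      integral_mono ((hρint p).sub ((hρdotint p).const_mul εh)) (hMint a b hrbδ)
        (fun ω' => hpt (X 0 ω'))
    rwa [integral_sub (hρint p) ((hρdotint p).const_mul εh), integral_const_mul] at hmono
  -- the sample comparison: for infinitely many k, avg M ≤ avg ρ(·, d a')
  have hkey : ∀ n : ℕ, ∃ k : ℕ, n + 1 ≤ k ∧
      (k : ℝ)⁻¹ • ∑ i ∈ Finset.range k, M a b (X i ω) ≤
      (k : ℝ)⁻¹ • ∑ i ∈ Finset.range k, ρ (X i ω) (d a') := by
    intro n
    have hpn : p ∈ closure (⋃ k : ℕ, ⋃ _ : n + 1 ≤ k, Ek k ω) := Set.mem_iInter.mp hp n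
    have hεx : 0 < r b - dist p (d a) := by linarith
    obtain ⟨x, hxmem, hxdist⟩ := Metric.mem_closure_iff.mp hpn _ hεx
    obtain ⟨k, hkmem⟩ := Set.mem_iUnion.mp hxmem
    obtain ⟨hk, hxEk⟩ := Set.mem_iUnion.mp hkmem
    rw [hEk] at hxEk
    have hxda : dist x (d a) < r b := by
      calc dist x (d a) ≤ dist x p + dist p (d a) := dist_triangle _ _ _
        _ < (r b - dist p (d a)) + dist p (d a) := by
            rw [dist_comm] at hxdist; linarith
        _ = r b := by ring
    refine ⟨k, hk, ?_⟩
    have h1 : ∑ i ∈ Finset.range k, M a b (X i ω) ≤ ∑ i ∈ Finset.range k, ρ (X i ω) x :=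
      Finset.sum_le_sum fun i _ => hMlex a b hrbδ (X i ω) x hxda
    have h2 : (1 / (k : ℝ)) * ∑ i ∈ Finset.range k, ρ (X i ω) x ≤
        (1 / (k : ℝ)) * ∑ i ∈ Finset.range k, ρ (X i ω) (d a') := hxEk (d a')
    have hknn : (0:ℝ) ≤ (k : ℝ)⁻¹ := by positivity
    rw [smul_eq_mul, smul_eq_mul]
    calc (k : ℝ)⁻¹ * ∑ i ∈ Finset.range k, M a b (X i ω)
        ≤ (k : ℝ)⁻¹ * ∑ i ∈ Finset.range k, ρ (X i ω) x :=
          mul_le_mul_of_nonneg_left h1 hknn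
      _ ≤ (k : ℝ)⁻¹ * ∑ i ∈ Finset.range k, ρ (X i ω) (d a') := by
          rw [← one_div]; exact h2
  -- pass to the limit: ∫ M ≤ F (d a')
  have hEMle : (∫ ω', M a b (X 0 ω') ∂Pm) ≤ ∫ ω', ρ (X 0 ω') (d a') ∂Pm := by
    refine le_of_forall_pos_le_add fun γ hγ => ?_
    have hγ2 : 0 < γ / 2 := by linarith
    obtain ⟨N1, hN1⟩ := (Metric.tendsto_atTop.mp (hω.2 a b hrbδ)) (γ / 2) hγ2
    obtain ⟨N2, hN2⟩ := (Metric.tendsto_atTop.mp (hω.1 a')) (γ / 2) hγ2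
    obtain ⟨k, hk, hSk⟩ := hkey (max N1 N2)
    have hkN1 : N1 ≤ k := le_trans (le_trans (le_max_left _ _) (Nat.le_succ _)) hk
    have hkN2 : N2 ≤ k := le_trans (le_trans (le_max_right _ _) (Nat.le_succ _)) hk
    have e1 := hN1 k hkN1
    have e2 := hN2 k hkN2
    rw [Real.dist_eq] at e1 e2
    have e1' : (∫ ω', M a b (X 0 ω') ∂Pm) - (k : ℝ)⁻¹ • ∑ i ∈ Finset.range k, M a b (X i ω)
        < γ / 2 := by
      have := abs_lt.mp e1
      linarith [this.1]
    have e2' : (k : ℝ)⁻¹ • ∑ i ∈ Finset.range k, ρ (X i ω) (d a')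
        - (∫ ω', ρ (X 0 ω') (d a') ∂Pm) < γ / 2 := by
      have := abs_lt.mp e2
      linarith [this.2]
    have := hSk
    simp only [smul_eq_mul] at e1' e2' this
    linarith
  -- conclude
  have hfinal : (∫ ω', ρ (X 0 ω') p ∂Pm) ≤ (∫ ω', ρ (X 0 ω') p' ∂Pm) + εh * Gp' + εh * Gp :=
    by linarith [hlower, hEMle, hupper]
  have hsmall : εh * Gp' + εh * Gp ≤ ε := by
    have h1 : εh * (Gp + Gp') ≤ εh * B := by
      refine mul_le_mul_of_nonneg_left ?_ hεhpos.le
      linarith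
    have h2 : εh * B = ε / 4 := by
      field_simp [hεh_def]
      rw [hεh_def, div_mul_eq_mul_div, div_mul_eq_mul_div, div_eq_iff (mul_pos four_pos hBpos).ne']
      ring
    nlinarith
  linarith
end

section
/- Let P have eigenvalues λ₁ ≥ λ₂ > 0, let N ≥ 1, and let κ, κ' ∈ S_ℂ be unit vectors in ℂ^N. Then for every Y ∈ ℂ^N, |ρ(Y,[κ]) − ρ(Y,[κ'])| ≤ √λ₁ · ((λ₁² + λ₂²)/(λ₁λ₂)) · ((λ₁ + 2)√(2N) + 8√2·N + 32√2·N·(λ₁² + λ₂²)/(λ₁λ₂)) · ‖Y‖² · d([κ],[κ']). In other words, [κ] ↦ ρ(Y,[κ]) admits the modulus of continuity h(t) = t with prefactor ρ̇(Y) = √λ₁((λ₁²+λ₂²)/(λ₁λ₂))((λ₁+2)√(2N) + 8√2 N + 32√2 N(λ₁²+λ₂²)/(λ₁λ₂))‖Y‖². -/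
open scoped BigOperators Matrix ComplexOrder
open MeasureTheory Filter Matrix

noncomputable section

/-- Complex `N`-vector with the Euclidean norm. -/
abbrev CVec (N : ℕ) := EuclideanSpace ℂ (Fin N)

/-- `vec(z) = (Re z, Im z)ᵀ ∈ ℝ²`. -/
def vecC (z : ℂ) : Fin 2 → ℝ := ![z.re, z.im]

/-- `M(z)` : real `2×2` matrix representation of `z ∈ ℂ`. -/
def MC (z : ℂ) : Matrix (Fin 2) (Fin 2) ℝ := !![z.re, -z.im; z.im, z.re]

/-- `z ⋄_A w = Σ_ν M(z_ν)ᵀ A M(w_ν)`. -/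
def diaA {N : ℕ} (A : Matrix (Fin 2) (Fin 2) ℝ) (z w : CVec N) : Matrix (Fin 2) (Fin 2) ℝ :=
  ∑ ν, (MC (z ν))ᵀ * A * MC (w ν)

/-- `z •_A w = Σ_ν M(z_ν)ᵀ A vec(w_ν)`. -/
def bulA {N : ℕ} (A : Matrix (Fin 2) (Fin 2) ℝ) (z w : CVec N) : Fin 2 → ℝ :=
  ∑ ν, ((MC (z ν))ᵀ * A) *ᵥ vecC (w ν)

/-- `⟨z,w⟩_A = Σ_ν vec(z_ν)ᵀ A vec(w_ν)`. -/
def iprA {N : ℕ} (A : Matrix (Fin 2) (Fin 2) ℝ) (z w : CVec N) : ℝ :=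
  ∑ ν, vecC (z ν) ⬝ᵥ (A *ᵥ vecC (w ν))

/-- Mahalanobis distance `d_A(z,w) = ‖z-w‖_A`. -/
def dMah {N : ℕ} (A : Matrix (Fin 2) (Fin 2) ℝ) (z w : CVec N) : ℝ :=
  Real.sqrt (iprA A (z - w) (z - w))

/-- `φ̂(κ,P,Y)`, the complex number with `vec(φ̂) = (κ ⋄_P κ)⁻¹ (κ •_P Y)`. -/
def phiHat {N : ℕ} (κ : CVec N) (P : Matrix (Fin 2) (Fin 2) ℝ) (Y : CVec N) : ℂ :=
  ((((diaA P κ κ)⁻¹ *ᵥ bulA P κ Y) 0 : ℝ) : ℂ) +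
    ((((diaA P κ κ)⁻¹ *ᵥ bulA P κ Y) 1 : ℝ) : ℂ) * Complex.I

/-- the loss `ρ(Y,[κ]) = d_P(Y, φ̂(κ,P,Y)κ)²`. -/
def rhoD {N : ℕ} (P : Matrix (Fin 2) (Fin 2) ℝ) (Y κ : CVec N) : ℝ :=
  dMah P Y (phiHat κ P Y • κ) ^ 2

/-- projective distance `d([κ],[κ']) = min_λ ‖κ - e^{iλ} κ'‖`. -/
def pdist {N : ℕ} (κ κ' : CVec N) : ℝ :=
  ⨅ t : ℝ, ‖κ - Complex.exp (t * Complex.I) • κ'‖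

/-- Euclidean norm on `ℝ²`. -/
def nrm2 (v : Fin 2 → ℝ) : ℝ := Real.sqrt (v 0 ^ 2 + v 1 ^ 2)

/-- Frobenius norm of a real `2×2` matrix. -/
def frob (A : Matrix (Fin 2) (Fin 2) ℝ) : ℝ := Real.sqrt (∑ i, ∑ j, A i j ^ 2)



/-! ### Auxiliary scalar (per-coordinate) lemmas -/

lemma MCT (z : ℂ) : (MC z)ᵀ = !![z.re, z.im; -z.im, z.re] := by
  ext i j; fin_cases i <;> fin_cases j <;> simp [MC]

lemma L_sub (A : Matrix (Fin 2) (Fin 2) ℝ) (hA : A 1 0 = A 0 1) (y w : ℂ) :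
    vecC (y - w) ⬝ᵥ (A *ᵥ vecC (y - w)) =
      vecC y ⬝ᵥ (A *ᵥ vecC y) - 2 * (vecC y ⬝ᵥ (A *ᵥ vecC w)) + vecC w ⬝ᵥ (A *ᵥ vecC w) := by
  simp [vecC, dotProduct, Matrix.mulVec, Fin.sum_univ_two, Complex.sub_re, Complex.sub_im]
  rw [hA]; ring

lemma L_add (A : Matrix (Fin 2) (Fin 2) ℝ) (hA : A 1 0 = A 0 1) (y w : ℂ) :
    vecC (y + w) ⬝ᵥ (A *ᵥ vecC (y + w)) =
      vecC y ⬝ᵥ (A *ᵥ vecC y) + 2 * (vecC y ⬝ᵥ (A *ᵥ vecC w)) + vecC w ⬝ᵥ (A *ᵥ vecC w) := by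
  simp [vecC, dotProduct, Matrix.mulVec, Fin.sum_univ_two, Complex.add_re, Complex.add_im]
  rw [hA]; ring

lemma L_smul_right (A : Matrix (Fin 2) (Fin 2) ℝ) (hA : A 1 0 = A 0 1) (y z phi : ℂ) :
    vecC y ⬝ᵥ (A *ᵥ vecC (phi * z)) = vecC phi ⬝ᵥ (((MC z)ᵀ * A) *ᵥ vecC y) := by
  simp [vecC, MCT, dotProduct, Matrix.mulVec, Matrix.mul_apply, Fin.sum_univ_two,
    Complex.mul_re, Complex.mul_im, Matrix.cons_val', Matrix.cons_val_zero, Matrix.cons_val_one,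
    Matrix.head_cons, Matrix.empty_val', Matrix.cons_val_fin_one, Matrix.vecHead,
    Matrix.transpose_apply]
  rw [hA]; ring

lemma L_smul_self (A : Matrix (Fin 2) (Fin 2) ℝ) (z phi : ℂ) :
    vecC (phi * z) ⬝ᵥ (A *ᵥ vecC (phi * z)) = vecC phi ⬝ᵥ (((MC z)ᵀ * A * MC z) *ᵥ vecC phi) := by
  simp [vecC, MC, MCT, dotProduct, Matrix.mulVec, Matrix.mul_apply, Fin.sum_univ_two,
    Complex.mul_re, Complex.mul_im, Matrix.cons_val', Matrix.cons_val_zero, Matrix.cons_val_one,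
    Matrix.head_cons, Matrix.empty_val', Matrix.cons_val_fin_one, Matrix.vecHead,
    Matrix.transpose_apply]
  ring

lemma L_real_smul (A : Matrix (Fin 2) (Fin 2) ℝ) (e : ℝ) (z w : ℂ) :
    vecC ((e:ℂ) * z) ⬝ᵥ (A *ᵥ vecC w) = e * (vecC z ⬝ᵥ (A *ᵥ vecC w)) := by
  simp [vecC, dotProduct, Matrix.mulVec, Fin.sum_univ_two, Complex.mul_re, Complex.mul_im]
  ring

lemma L_real_smul_right (A : Matrix (Fin 2) (Fin 2) ℝ) (e : ℝ) (z w : ℂ) :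
    vecC z ⬝ᵥ (A *ᵥ vecC ((e:ℂ) * w)) = e * (vecC z ⬝ᵥ (A *ᵥ vecC w)) := by
  simp [vecC, dotProduct, Matrix.mulVec, Fin.sum_univ_two, Complex.mul_re, Complex.mul_im]
  ring

lemma L_sandwich (A : Matrix (Fin 2) (Fin 2) ℝ) (z : ℂ) (v : Fin 2 → ℝ) :
    v ⬝ᵥ (((MC z)ᵀ * A * MC z) *ᵥ v) = (MC z *ᵥ v) ⬝ᵥ (A *ᵥ (MC z *ᵥ v)) := by
  simp [MC, MCT, dotProduct, Matrix.mulVec, Matrix.mul_apply, Fin.sum_univ_two,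
    Matrix.cons_val', Matrix.cons_val_zero, Matrix.cons_val_one,
    Matrix.head_cons, Matrix.empty_val', Matrix.cons_val_fin_one, Matrix.vecHead,
    Matrix.transpose_apply]
  ring

lemma L_Mnorm (z : ℂ) (v : Fin 2 → ℝ) :
    (MC z *ᵥ v) 0 ^ 2 + (MC z *ᵥ v) 1 ^ 2 = (z.re^2 + z.im^2) * (v 0 ^2 + v 1 ^2) := by
  simp [MC, dotProduct, Matrix.mulVec, Fin.sum_univ_two]
  ring

lemma L_symm (A : Matrix (Fin 2) (Fin 2) ℝ) (hA : A 1 0 = A 0 1) (z : ℂ) :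
    ((MC z)ᵀ * A * MC z) 1 0 = ((MC z)ᵀ * A * MC z) 0 1 := by
  simp [MC, MCT, Matrix.mul_apply, Fin.sum_univ_two,
    Matrix.cons_val', Matrix.cons_val_zero, Matrix.cons_val_one,
    Matrix.head_cons, Matrix.empty_val', Matrix.cons_val_fin_one, Matrix.vecHead,
    Matrix.transpose_apply]
  rw [hA]; ring

lemma D1 (G : Matrix (Fin 2) (Fin 2) ℝ) (hG : G 1 0 = G 0 1) (u v : Fin 2 → ℝ) :
    (v - u) ⬝ᵥ (G *ᵥ (v - u)) =
      v ⬝ᵥ (G *ᵥ v) - 2*(v ⬝ᵥ (G *ᵥ u)) + u ⬝ᵥ (G *ᵥ u) := by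
  simp [dotProduct, Matrix.mulVec, Fin.sum_univ_two, Pi.sub_apply]
  rw [hG]; ring

/-! ### Sum helpers -/

lemma dot_sum_fun {N : ℕ} (v : Fin 2 → ℝ) (f : Fin N → (Fin 2 → ℝ)) :
    v ⬝ᵥ (∑ ν, f ν) = ∑ ν, v ⬝ᵥ f ν := by
  calc v ⬝ᵥ (∑ ν, f ν) = ∑ i, ∑ ν, v i * f ν i := by
        simp [dotProduct, Finset.sum_apply, Finset.mul_sum]
    _ = ∑ ν, ∑ i, v i * f ν i := Finset.sum_comm
    _ = _ := rfl

lemma sum_mat_mulVec {N : ℕ} (f : Fin N → Matrix (Fin 2) (Fin 2) ℝ) (v : Fin 2 → ℝ) :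
    (∑ ν, f ν) *ᵥ v = ∑ ν, (f ν *ᵥ v) := by
  ext i
  calc ((∑ ν, f ν) *ᵥ v) i = ∑ j, ∑ ν, f ν i j * v j := by
        simp [Matrix.mulVec, dotProduct, Matrix.sum_apply, Finset.sum_apply, Finset.sum_mul]
    _ = ∑ ν, ∑ j, f ν i j * v j := Finset.sum_comm
    _ = ∑ ν, (f ν *ᵥ v) i := rfl
    _ = _ := by rw [Finset.sum_apply]

lemma cv_sub {N : ℕ} (x y : CVec N) (ν : Fin N) : (x - y) ν = x ν - y ν := rfl
lemma cv_smul {N : ℕ} (c : ℂ) (x : CVec N) (ν : Fin N) : (c • x) ν = c * x ν := rfl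

lemma normsq_c (z : ℂ) : ‖z‖^2 = z.re^2 + z.im^2 := by
  rw [Complex.sq_norm, Complex.normSq_apply]; ring

lemma normsq_vec {N : ℕ} (z : CVec N) : ‖z‖^2 = ∑ ν, ((z ν).re^2 + (z ν).im^2) := by
  rw [EuclideanSpace.norm_eq, Real.sq_sqrt (by positivity)]
  exact Finset.sum_congr rfl fun ν _ => normsq_c (z ν)

/-! ### Global bilinear-form lemmas -/

lemma ipr_sub {N : ℕ} (A : Matrix (Fin 2) (Fin 2) ℝ) (hA : A 1 0 = A 0 1) (x y : CVec N) :
    iprA A (x - y) (x - y) = iprA A x x - 2 * iprA A x y + iprA A y y := by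
  unfold iprA
  rw [Finset.mul_sum, ← Finset.sum_sub_distrib, ← Finset.sum_add_distrib]
  exact Finset.sum_congr rfl fun ν _ => by rw [cv_sub]; exact L_sub A hA (x ν) (y ν)

lemma ipr_Y_smul {N : ℕ} (A : Matrix (Fin 2) (Fin 2) ℝ) (hA : A 1 0 = A 0 1)
    (Y κ0 : CVec N) (φ : ℂ) :
    iprA A Y (φ • κ0) = vecC φ ⬝ᵥ bulA A κ0 Y := by
  unfold iprA bulA
  rw [dot_sum_fun]
  refine Finset.sum_congr rfl fun ν _ => ?_
  rw [cv_smul]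
  exact L_smul_right A hA (Y ν) (κ0 ν) φ

lemma ipr_smul_self {N : ℕ} (A : Matrix (Fin 2) (Fin 2) ℝ) (κ0 : CVec N) (φ : ℂ) :
    iprA A (φ • κ0) (φ • κ0) = vecC φ ⬝ᵥ (diaA A κ0 κ0 *ᵥ vecC φ) := by
  unfold iprA diaA
  rw [sum_mat_mulVec, dot_sum_fun]
  refine Finset.sum_congr rfl fun ν _ => ?_
  rw [cv_smul]
  exact L_smul_self A (κ0 ν) φ

lemma ipr_real_smul_left {N : ℕ} (A : Matrix (Fin 2) (Fin 2) ℝ) (e : ℝ) (x y : CVec N) :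
    iprA A ((e:ℂ) • x) y = e * iprA A x y := by
  unfold iprA
  rw [Finset.mul_sum]
  exact Finset.sum_congr rfl fun ν _ => by rw [cv_smul]; exact L_real_smul A e (x ν) (y ν)

lemma ipr_real_smul_right {N : ℕ} (A : Matrix (Fin 2) (Fin 2) ℝ) (e : ℝ) (x y : CVec N) :
    iprA A x ((e:ℂ) • y) = e * iprA A x y := by
  unfold iprA
  rw [Finset.mul_sum]
  exact Finset.sum_congr rfl fun ν _ => by rw [cv_smul]; exact L_real_smul_right A e (x ν) (y ν)

/-! ### The quadratic form bounds for `P` -/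

lemma quadP (P R : Matrix (Fin 2) (Fin 2) ℝ) (l1 l2 : ℝ)
    (hR : R * Rᵀ = 1) (hP : P = R * Matrix.diagonal ![l1, l2] * Rᵀ)
    (hl12 : l2 ≤ l1) (v : Fin 2 → ℝ) :
    l2 * (v 0 ^2 + v 1 ^2) ≤ v ⬝ᵥ (P *ᵥ v) ∧ v ⬝ᵥ (P *ᵥ v) ≤ l1 * (v 0 ^2 + v 1 ^2) := by
  subst hP
  have h00 := congrFun (congrFun hR 0) 0
  have h01 := congrFun (congrFun hR 0) 1
  have h11 := congrFun (congrFun hR 1) 1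
  simp [Matrix.mul_apply, Fin.sum_univ_two, Matrix.one_apply] at h00 h01 h11
  have hid : v ⬝ᵥ ((R * Matrix.diagonal ![l1, l2] * Rᵀ) *ᵥ v)
      = l1 * (R 0 0 * v 0 + R 1 0 * v 1)^2 + l2 * (R 0 1 * v 0 + R 1 1 * v 1)^2 := by
    simp [Matrix.mulVec, dotProduct, Matrix.mul_apply, Matrix.diagonal, Fin.sum_univ_two]
    ring
  have hnrm : v 0 ^2 + v 1 ^2 = (R 0 0 * v 0 + R 1 0 * v 1)^2 + (R 0 1 * v 0 + R 1 1 * v 1)^2 := by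
    linear_combination (-(v 0^2))*h00 + (-(v 1^2))*h11 + (-(2*v 0*v 1))*h01
  constructor
  · rw [hid, hnrm]
    nlinarith [sq_nonneg (R 0 0 * v 0 + R 1 0 * v 1)]
  · rw [hid, hnrm]
    nlinarith [sq_nonneg (R 0 1 * v 0 + R 1 1 * v 1)]

lemma Psym (P R : Matrix (Fin 2) (Fin 2) ℝ) (l1 l2 : ℝ)
    (hP : P = R * Matrix.diagonal ![l1, l2] * Rᵀ) : P 1 0 = P 0 1 := by
  subst hP
  simp [Matrix.mul_apply, Matrix.diagonal, Fin.sum_univ_two]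
  ring


/-! ### The main structural lemma about `rhoD` -/

lemma rho_pack {N : ℕ} (P R : Matrix (Fin 2) (Fin 2) ℝ) (l1 l2 : ℝ)
    (hR : R * Rᵀ = 1) (hPspec : P = R * Matrix.diagonal ![l1, l2] * Rᵀ)
    (hl2 : 0 < l2) (hl12 : l2 ≤ l1) (Y κ0 : CVec N) (hκ0 : ‖κ0‖ = 1) :
    (iprA P (Y - phiHat κ0 P Y • κ0) (Y - phiHat κ0 P Y • κ0) = rhoD P Y κ0)
    ∧ (∀ φ : ℂ, rhoD P Y κ0 ≤ iprA P (Y - φ • κ0) (Y - φ • κ0))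
    ∧ rhoD P Y κ0 ≤ l1 * ‖Y‖^2
    ∧ l2 * ‖phiHat κ0 P Y‖^2 ≤ l1 * ‖Y‖^2 := by
  have hPsym : P 1 0 = P 0 1 := Psym P R l1 l2 hPspec
  -- quadratic bounds for the form q z := iprA P z z
  have hq_low : ∀ z : CVec N, l2 * ‖z‖^2 ≤ iprA P z z := by
    intro z
    rw [normsq_vec, Finset.mul_sum]
    unfold iprA
    refine Finset.sum_le_sum fun ν _ => ?_
    have h := (quadP P R l1 l2 hR hPspec hl12 (vecC (z ν))).1
    simpa [vecC] using h
  have hq_up : ∀ z : CVec N, iprA P z z ≤ l1 * ‖z‖^2 := by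
    intro z
    rw [normsq_vec, Finset.mul_sum]
    unfold iprA
    refine Finset.sum_le_sum fun ν _ => ?_
    have h := (quadP P R l1 l2 hR hPspec hl12 (vecC (z ν))).2
    simpa [vecC] using h
  have hq0 : ∀ z : CVec N, 0 ≤ iprA P z z := fun z =>
    le_trans (by positivity) (hq_low z)
  -- the Gram matrix
  set G := diaA P κ0 κ0 with hGdef
  set b := bulA P κ0 Y with hbdef
  have hκsum : ∑ ν, ((κ0 ν).re^2 + (κ0 ν).im^2) = 1 := by
    have := normsq_vec κ0
    rw [hκ0] at this
    simpa using this.symm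
  have hGlow : ∀ v : Fin 2 → ℝ, l2 * (v 0 ^2 + v 1 ^2) ≤ v ⬝ᵥ (G *ᵥ v) := by
    intro v
    have hstep : ∀ ν : Fin N, l2 * (((κ0 ν).re^2 + (κ0 ν).im^2) * (v 0 ^2 + v 1 ^2))
        ≤ v ⬝ᵥ (((MC (κ0 ν))ᵀ * P * MC (κ0 ν)) *ᵥ v) := by
      intro ν
      rw [L_sandwich]
      have h := (quadP P R l1 l2 hR hPspec hl12 (MC (κ0 ν) *ᵥ v)).1
      rw [L_Mnorm] at h
      exact h
    have : ∑ ν, l2 * (((κ0 ν).re^2 + (κ0 ν).im^2) * (v 0 ^2 + v 1 ^2))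
        ≤ ∑ ν, v ⬝ᵥ (((MC (κ0 ν))ᵀ * P * MC (κ0 ν)) *ᵥ v) :=
      Finset.sum_le_sum fun ν _ => hstep ν
    calc l2 * (v 0 ^2 + v 1 ^2)
        = ∑ ν, l2 * (((κ0 ν).re^2 + (κ0 ν).im^2) * (v 0 ^2 + v 1 ^2)) := by
          rw [show ∀ r : ℝ, (∑ ν, l2 * (((κ0 ν).re^2 + (κ0 ν).im^2) * r))
              = l2 * (∑ ν, ((κ0 ν).re^2 + (κ0 ν).im^2)) * r from
            fun r => by simp only [Finset.mul_sum, Finset.sum_mul]; exact Finset.sum_congr rfl fun ν _ => by ring,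
            hκsum]
          ring
      _ ≤ ∑ ν, v ⬝ᵥ (((MC (κ0 ν))ᵀ * P * MC (κ0 ν)) *ᵥ v) := this
      _ = v ⬝ᵥ (G *ᵥ v) := by
          rw [hGdef]
          unfold diaA
          rw [sum_mat_mulVec, dot_sum_fun]
  have hGsym : G 1 0 = G 0 1 := by
    rw [hGdef]
    unfold diaA
    rw [Matrix.sum_apply, Matrix.sum_apply]
    exact Finset.sum_congr rfl fun ν _ => L_symm P hPsym (κ0 ν)
  have hGherm : G.IsHermitian := by
    ext i j
    fin_cases i <;> fin_cases j <;>
      simp [Matrix.conjTranspose_apply, hGsym]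
  have hpos2 : ∀ v : Fin 2 → ℝ, v ≠ 0 → 0 < v 0 ^2 + v 1 ^2 := by
    intro v hv
    rcases (by
      by_contra h
      push_neg at h
      exact hv (funext fun i => by fin_cases i <;> simp [h.1, h.2]) :
      v 0 ≠ 0 ∨ v 1 ≠ 0) with h | h
    · positivity
    · positivity
  have hpd : G.PosDef := by
    refine Matrix.PosDef.of_dotProduct_mulVec_pos hGherm fun x hx => ?_
    have h1 : 0 < l2 * (x 0 ^2 + x 1 ^2) := by
      have := hpos2 x hx
      positivity
    have h2 := hGlow x
    simp only [star_trivial]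
    linarith
  have hdet : IsUnit G.det := isUnit_iff_ne_zero.mpr (ne_of_gt hpd.det_pos)
  set vh := G⁻¹ *ᵥ b with hvhdef
  have hGv : G *ᵥ vh = b := by
    rw [hvhdef, Matrix.mulVec_mulVec, Matrix.mul_nonsing_inv _ hdet, Matrix.one_mulVec]
  have hvec : vecC (phiHat κ0 P Y) = vh := by
    funext i
    fin_cases i <;>
      simp [vecC, phiHat, hvhdef, hGdef, hbdef]
  -- expansion of the quadratic loss
  have hexp : ∀ φ : ℂ, iprA P (Y - φ • κ0) (Y - φ • κ0)
      = iprA P Y Y - 2 * (vecC φ ⬝ᵥ b) + vecC φ ⬝ᵥ (G *ᵥ vecC φ) := by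
    intro φ
    rw [ipr_sub P hPsym, ipr_Y_smul P hPsym, ipr_smul_self, ← hbdef, ← hGdef]
  have hrho_eq : iprA P (Y - phiHat κ0 P Y • κ0) (Y - phiHat κ0 P Y • κ0) = rhoD P Y κ0 := by
    unfold rhoD dMah
    rw [Real.sq_sqrt (hq0 _)]
  -- value of the loss
  have hval : rhoD P Y κ0 = iprA P Y Y - vh ⬝ᵥ b := by
    rw [← hrho_eq, hexp, hvec]
    have : vh ⬝ᵥ (G *ᵥ vh) = vh ⬝ᵥ b := by rw [hGv]
    rw [this]; ring
  -- minimality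
  have hmin : ∀ φ : ℂ, rhoD P Y κ0 ≤ iprA P (Y - φ • κ0) (Y - φ • κ0) := by
    intro φ
    rw [hexp, hval]
    have hquad : 0 ≤ (vecC φ - vh) ⬝ᵥ (G *ᵥ (vecC φ - vh)) :=
      le_trans (by positivity) (hGlow (vecC φ - vh))
    rw [D1 G hGsym vh (vecC φ)] at hquad
    have h1 : vecC φ ⬝ᵥ (G *ᵥ vh) = vecC φ ⬝ᵥ b := by rw [hGv]
    have h2 : vh ⬝ᵥ (G *ᵥ vh) = vh ⬝ᵥ b := by rw [hGv]
    rw [h1, h2] at hquad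
    linarith
  refine ⟨hrho_eq, hmin, ?_, ?_⟩
  · have h := hmin 0
    have h0 : Y - (0:ℂ) • κ0 = Y := by simp
    rw [h0] at h
    exact le_trans h (hq_up Y)
  · -- bound on the coefficient
    have hvb : vh ⬝ᵥ b ≤ l1 * ‖Y‖^2 := by
      have h1 : 0 ≤ rhoD P Y κ0 := by unfold rhoD; positivity
      have := hq_up Y
      rw [hval] at h1
      linarith
    have hGvh : l2 * (vh 0 ^2 + vh 1 ^2) ≤ vh ⬝ᵥ b := by
      have := hGlow vh
      rw [hGv] at this
      exact this
    have hnφ : ‖phiHat κ0 P Y‖^2 = vh 0 ^2 + vh 1 ^2 := by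
      rw [normsq_c]
      have h0 : (phiHat κ0 P Y).re = vh 0 := by
        have := congrFun hvec 0
        simpa [vecC] using this
      have h1 : (phiHat κ0 P Y).im = vh 1 := by
        have := congrFun hvec 1
        simpa [vecC] using this
      rw [h0, h1]
    rw [hnφ]
    linarith


lemma cv_add {N : ℕ} (x y : CVec N) (ν : Fin N) : (x + y) ν = x ν + y ν := rfl

lemma ipr_add {N : ℕ} (A : Matrix (Fin 2) (Fin 2) ℝ) (hA : A 1 0 = A 0 1) (x y : CVec N) :
    iprA A (x + y) (x + y) = iprA A x x + 2 * iprA A x y + iprA A y y := by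
  unfold iprA
  rw [Finset.mul_sum, ← Finset.sum_add_distrib, ← Finset.sum_add_distrib]
  exact Finset.sum_congr rfl fun ν _ => by rw [cv_add]; exact L_add A hA (x ν) (y ν)

/-! ### Comparison of constants -/

lemma key_ineq (l1 l2 a bb s2 : ℝ) (hl2 : 0 < l2) (hl12 : l2 ≤ l1)
    (ha2 : a^2 = l1) (hapos : 0 < a) (hb2 : bb^2 = l2) (hbpos : 0 < bb)
    (hba : bb ≤ a) (hs2 : 1 ≤ s2) (hs2sq : s2^2 = 2) :
    4*l2 ≤ s2*a*l2 + 32*s2*a := by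
  rcases le_or_gt 8 l1 with h8 | h8
  · have hsa : (0:ℝ) < s2*a := by positivity
    have h16 : 16 ≤ (s2*a)^2 := by nlinarith
    have h4 : 4 ≤ s2*a := by nlinarith
    nlinarith [mul_le_mul_of_nonneg_right h4 hl2.le]
  · have hb3 : bb < 3 := by nlinarith
    have h12 : 4*l2 ≤ 12*bb := by nlinarith
    have h32 : 12*bb ≤ 32*(s2*a) := by nlinarith
    have hnn : (0:ℝ) ≤ s2*a*l2 := by positivity
    linarith

lemma const_cmp (l1 l2 : ℝ) (N : ℕ) (hN : 1 ≤ N) (hl2 : 0 < l2) (hl12 : l2 ≤ l1) :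
    4*l1^2/l2 ≤ Real.sqrt l1 * ((l1^2+l2^2)/(l1*l2)) *
      ((l1+2)*Real.sqrt (2*N) + 8*Real.sqrt 2*N + 32*Real.sqrt 2*N*(l1^2+l2^2)/(l1*l2)) := by
  have hl1 : 0 < l1 := lt_of_lt_of_le hl2 hl12
  have hN1 : (1:ℝ) ≤ (N:ℝ) := by exact_mod_cast hN
  set a := Real.sqrt l1 with hadef
  have ha2 : a^2 = l1 := Real.sq_sqrt hl1.le
  have hapos : 0 < a := Real.sqrt_pos.2 hl1
  set bb := Real.sqrt l2 with hbdef
  have hb2 : bb^2 = l2 := Real.sq_sqrt hl2.le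
  have hbpos : 0 < bb := Real.sqrt_pos.2 hl2
  have hba : bb ≤ a := Real.sqrt_le_sqrt hl12
  set s2 := Real.sqrt 2 with hs2def
  have hs2 : (1:ℝ) ≤ s2 := by
    rw [hs2def, show (1:ℝ) = Real.sqrt 1 by simp]
    exact Real.sqrt_le_sqrt (by norm_num)
  have hsN : s2 ≤ Real.sqrt (2*N) := Real.sqrt_le_sqrt (by nlinarith)
  set r := (l1^2+l2^2)/(l1*l2) with hrdef
  have hrpos : 0 < r := by positivity
  have hr : l1/l2 ≤ r := by
    rw [hrdef, div_le_div_iff₀ hl2 (by positivity)]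
    nlinarith
  have hdpos : 0 < l1/l2 := by positivity
  have hT1 : s2 * l1 + 32*s2*(l1/l2) ≤
      (l1+2)*Real.sqrt (2*N) + 8*s2*N + 32*s2*N*(l1^2+l2^2)/(l1*l2) := by
    have t1 : s2 * l1 ≤ (l1+2)*Real.sqrt (2*N) := by nlinarith [hsN, hs2, hl1.le]
    have t2 : (0:ℝ) ≤ 8*s2*N := by positivity
    have t3 : 32*s2*(l1/l2) ≤ 32*s2*N*(l1^2+l2^2)/(l1*l2) := by
      have he : 32*s2*N*(l1^2+l2^2)/(l1*l2) = 32*s2*N*r := by rw [hrdef]; ring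
      rw [he]
      have h1 : l1/l2 ≤ N*r := by nlinarith
      nlinarith [hs2]
    linarith
  have hTnn : (0:ℝ) ≤ s2 * l1 + 32*s2*(l1/l2) := by positivity
  have step : a * (l1/l2) * (s2*l1 + 32*s2*(l1/l2)) ≤
      a * r * ((l1+2)*Real.sqrt (2*N) + 8*s2*N + 32*s2*N*(l1^2+l2^2)/(l1*l2)) := by
    have h1 : a * (l1/l2) ≤ a * r := by nlinarith
    exact mul_le_mul h1 hT1 hTnn (by positivity)
  have main : 4*l1^2/l2 ≤ a * (l1/l2) * (s2*l1 + 32*s2*(l1/l2)) := by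
    have hexp : a*(l1/l2)*(s2*l1 + 32*s2*(l1/l2)) = (s2*a*l1^2*l2 + 32*s2*a*l1^2)/l2^2 := by
      field_simp
    have hexp2 : 4*l1^2/l2 = (4*l1^2*l2)/l2^2 := by
      field_simp
    rw [hexp, hexp2, div_le_div_iff₀ (by positivity) (by positivity)]
    have hs2sq : s2^2 = 2 := by rw [hs2def]; exact Real.sq_sqrt (by norm_num)
    have key : 4*l2 ≤ s2*a*l2 + 32*s2*a :=
      key_ineq l1 l2 a bb s2 hl2 hl12 ha2 hapos hb2 hbpos hba hs2 hs2sq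
    have h := mul_le_mul_of_nonneg_left key (show (0:ℝ) ≤ l1^2*l2^2 by positivity)
    calc 4*l1^2*l2*l2^2 = l1^2*l2^2*(4*l2) := by ring
      _ ≤ l1^2*l2^2*(s2*a*l2+32*s2*a) := h
      _ = (s2*a*l1^2*l2 + 32*s2*a*l1^2)*l2^2 := by ring
  exact le_trans main step

set_option maxHeartbeats 1000000 in
lemma rho_lip {N : ℕ} (P R : Matrix (Fin 2) (Fin 2) ℝ) (l1 l2 : ℝ)
    (hR : R * Rᵀ = 1) (hPspec : P = R * Matrix.diagonal ![l1, l2] * Rᵀ)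
    (hl2 : 0 < l2) (hl12 : l2 ≤ l1) (Y : CVec N) (κa κb : CVec N)
    (ha : ‖κa‖ = 1) (hb : ‖κb‖ = 1) :
    rhoD P Y κa - rhoD P Y κb ≤ 4*l1^2/l2*‖Y‖^2*‖κa - κb‖ := by
  have hl1 : 0 < l1 := lt_of_lt_of_le hl2 hl12
  have hPsym : P 1 0 = P 0 1 := Psym P R l1 l2 hPspec
  have hq_up : ∀ z : CVec N, iprA P z z ≤ l1 * ‖z‖^2 := by
    intro z
    rw [normsq_vec, Finset.mul_sum]
    unfold iprA
    refine Finset.sum_le_sum fun ν _ => ?_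
    have h := (quadP P R l1 l2 hR hPspec hl12 (vecC (z ν))).2
    simpa [vecC] using h
  have hq0 : ∀ z : CVec N, 0 ≤ iprA P z z := by
    intro z
    have hlow : l2 * ‖z‖^2 ≤ iprA P z z := by
      rw [normsq_vec, Finset.mul_sum]
      unfold iprA
      refine Finset.sum_le_sum fun ν _ => ?_
      have h := (quadP P R l1 l2 hR hPspec hl12 (vecC (z ν))).1
      simpa [vecC] using h
    exact le_trans (by positivity) hlow
  have hY2 : (0:ℝ) ≤ ‖Y‖^2 := sq_nonneg _
  obtain ⟨heqb, hminb, hleb, hphib⟩ := rho_pack P R l1 l2 hR hPspec hl2 hl12 Y κb hb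
  obtain ⟨_, hmina, _, _⟩ := rho_pack P R l1 l2 hR hPspec hl2 hl12 Y κa ha
  set s := ‖κa - κb‖ with hs
  have hsnn : 0 ≤ s := norm_nonneg _
  rcases eq_or_lt_of_le hsnn with h0 | hspos
  · have hab : κa = κb := by
      have hz : ‖κa - κb‖ = 0 := h0.symm
      exact sub_eq_zero.mp (norm_eq_zero.mp hz)
    rw [hab, ← h0]
    simp
  · have hsle2 : s ≤ 2 := by
      rw [hs]
      calc ‖κa - κb‖ ≤ ‖κa‖ + ‖κb‖ := norm_sub_le κa κb
        _ = 2 := by rw [ha, hb]; norm_num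
    set φb := phiHat κb P Y with hφb
    set x := Y - φb • κb with hx
    set y := φb • (κb - κa) with hy
    have hxy : Y - φb • κa = x + y := by
      rw [hx, hy, smul_sub]
      abel
    have f1 : rhoD P Y κa ≤ iprA P (x+y) (x+y) := by rw [← hxy]; exact hmina φb
    rw [ipr_add P hPsym] at f1
    have cauchy : 2*(s*iprA P x y) ≤ s^2*iprA P x x + iprA P y y := by
      have h := hq0 ((s:ℂ) • x - y)
      rw [ipr_sub P hPsym, ipr_real_smul_left, ipr_real_smul_left, ipr_real_smul_right] at h
      nlinarith [h]
    have hqy : iprA P y y ≤ l1*(‖φb‖^2*s^2) := by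
      have h := hq_up y
      have hny : ‖y‖ = ‖φb‖ * s := by
        rw [hy, norm_smul, hs, norm_sub_rev]
      rw [hny] at h
      calc iprA P y y ≤ l1*(‖φb‖*s)^2 := h
        _ = l1*(‖φb‖^2*s^2) := by ring
    have hqx : iprA P x x = rhoD P Y κb := heqb
    have A2 : s*(rhoD P Y κa - rhoD P Y κb) ≤ s^2*(rhoD P Y κb) + iprA P y y + s*(iprA P y y) := by
      have e1 : rhoD P Y κa - rhoD P Y κb ≤ 2*iprA P x y + iprA P y y := by
        rw [← hqx]; linarith
      have e2 := mul_le_mul_of_nonneg_left e1 hspos.le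
      rw [← hqx]
      nlinarith [e2, cauchy]
    have A4 : l2*(iprA P y y) ≤ l1^2*‖Y‖^2*s^2 := by
      have h1 := mul_le_mul_of_nonneg_left hqy hl2.le
      have h2 := mul_le_mul_of_nonneg_right hphib (show (0:ℝ) ≤ l1*s^2 by positivity)
      calc l2*(iprA P y y) ≤ l2*(l1*(‖φb‖^2*s^2)) := h1
        _ = (l2*‖φb‖^2)*(l1*s^2) := by ring
        _ ≤ (l1*‖Y‖^2)*(l1*s^2) := h2
        _ = l1^2*‖Y‖^2*s^2 := by ring
    have A5 : s*(l2*(rhoD P Y κa - rhoD P Y κb)) ≤ s*(l2*(4*l1^2/l2*‖Y‖^2*s)) := by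
      have hrhs : l2*(4*l1^2/l2*‖Y‖^2*s) = 4*l1^2*‖Y‖^2*s := by
        field_simp
      rw [hrhs]
      have h1 := mul_le_mul_of_nonneg_left A2 hl2.le
      have h2 : l2*(s^2*rhoD P Y κb) ≤ s^2*(l1*l2*‖Y‖^2) := by
        have hp := mul_le_mul_of_nonneg_left hleb (show (0:ℝ) ≤ l2*s^2 by positivity)
        calc l2*(s^2*rhoD P Y κb) = l2*s^2*rhoD P Y κb := by ring
          _ ≤ l2*s^2*(l1*‖Y‖^2) := hp
          _ = s^2*(l1*l2*‖Y‖^2) := by ring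
      have h3 : s*(l2*iprA P y y) ≤ 2*(l1^2*‖Y‖^2*s^2) := by
        have hynn : 0 ≤ l2*iprA P y y := mul_nonneg hl2.le (hq0 y)
        calc s*(l2*iprA P y y) ≤ 2*(l2*iprA P y y) := by nlinarith
          _ ≤ 2*(l1^2*‖Y‖^2*s^2) := by linarith
      have h4 : s^2*(l1*l2*‖Y‖^2) ≤ s^2*(l1^2*‖Y‖^2) := by
        have hll : l1*l2 ≤ l1^2 := by nlinarith
        have hp2 := mul_le_mul_of_nonneg_right hll hY2
        have hp3 := mul_le_mul_of_nonneg_left hp2 (sq_nonneg s)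
        calc s^2*(l1*l2*‖Y‖^2) = s^2*(l1*l2*‖Y‖^2) := rfl
          _ ≤ s^2*(l1^2*‖Y‖^2) := by nlinarith [hp3]
      calc s*(l2*(rhoD P Y κa - rhoD P Y κb))
          = l2*(s*(rhoD P Y κa - rhoD P Y κb)) := by ring
        _ ≤ l2*(s^2*(rhoD P Y κb) + iprA P y y + s*(iprA P y y)) := h1
        _ = l2*(s^2*rhoD P Y κb) + l2*(iprA P y y) + s*(l2*iprA P y y) := by ring
        _ ≤ s^2*(l1*l2*‖Y‖^2) + l1^2*‖Y‖^2*s^2 + 2*(l1^2*‖Y‖^2*s^2) := by linarith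
        _ ≤ s^2*(l1^2*‖Y‖^2) + l1^2*‖Y‖^2*s^2 + 2*(l1^2*‖Y‖^2*s^2) := by linarith
        _ = s*(4*l1^2*‖Y‖^2*s) := by ring
    have A6 := le_of_mul_le_mul_left A5 hspos
    have A7 := le_of_mul_le_mul_left A6 hl2
    linarith

set_option maxHeartbeats 1000000 in
lemma rho_phase {N : ℕ} (P R : Matrix (Fin 2) (Fin 2) ℝ) (l1 l2 : ℝ)
    (hR : R * Rᵀ = 1) (hPspec : P = R * Matrix.diagonal ![l1, l2] * Rᵀ)
    (hl2 : 0 < l2) (hl12 : l2 ≤ l1) (Y kp : CVec N) (hkp : ‖kp‖ = 1) (t : ℝ) :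
    rhoD P Y (Complex.exp (↑t * Complex.I) • kp) = rhoD P Y kp := by
  set e := Complex.exp (↑t * Complex.I) with he
  have habs : ‖e‖ = 1 := Complex.norm_exp_ofReal_mul_I t
  have hne : e ≠ 0 := Complex.exp_ne_zero _
  have hnorm : ‖e • kp‖ = 1 := by
    rw [norm_smul, habs, hkp, one_mul]
  obtain ⟨heq1, hmin1, _, _⟩ := rho_pack P R l1 l2 hR hPspec hl2 hl12 Y kp hkp
  obtain ⟨heq2, hmin2, _, _⟩ := rho_pack P R l1 l2 hR hPspec hl2 hl12 Y (e • kp) hnorm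
  apply le_antisymm
  · have h := hmin2 (phiHat kp P Y * e⁻¹)
    have harr : (phiHat kp P Y * e⁻¹) • (e • kp) = phiHat kp P Y • kp := by
      rw [smul_smul]
      congr 1
      field_simp
    rw [harr, heq1] at h
    exact h
  · have h := hmin1 (phiHat (e • kp) P Y * e)
    have harr : (phiHat (e • kp) P Y * e) • kp = phiHat (e • kp) P Y • (e • kp) := by
      rw [smul_smul]
    rw [harr, heq2] at h
    exact h

set_option maxHeartbeats 1000000 in
/-- modulus of continuity of the loss `[κ] ↦ ρ(Y,[κ])` with `h(t)=t` and explicit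
prefactor, for `P` symmetric positive definite with eigenvalues `λ₁ ≥ λ₂ > 0`. -/
theorem rho_modulus_of_continuity {N : ℕ} (hN : 1 ≤ N)
    (P R : Matrix (Fin 2) (Fin 2) ℝ) (l1 l2 : ℝ)
    (hR : R * Rᵀ = 1) (hPspec : P = R * Matrix.diagonal ![l1, l2] * Rᵀ)
    (hl2 : 0 < l2) (hl12 : l2 ≤ l1)
    (κ κ' : CVec N) (hκ : ‖κ‖ = 1) (hκ' : ‖κ'‖ = 1) (Y : CVec N) :
    |rhoD P Y κ - rhoD P Y κ'| ≤
      Real.sqrt l1 * ((l1 ^ 2 + l2 ^ 2) / (l1 * l2)) *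
        ((l1 + 2) * Real.sqrt (2 * N) + 8 * Real.sqrt 2 * N +
          32 * Real.sqrt 2 * N * (l1 ^ 2 + l2 ^ 2) / (l1 * l2)) *
        ‖Y‖ ^ 2 * pdist κ κ' := by
  have hl1 : 0 < l1 := lt_of_lt_of_le hl2 hl12
  have hY2 : (0:ℝ) ≤ ‖Y‖^2 := sq_nonneg _
  have hbound : ∀ t : ℝ, |rhoD P Y κ - rhoD P Y κ'| ≤
      (4*l1^2/l2*‖Y‖^2) * ‖κ - Complex.exp (↑t * Complex.I) • κ'‖ := by
    intro t
    set e := Complex.exp (↑t * Complex.I) with he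
    have habs : ‖e‖ = 1 := Complex.norm_exp_ofReal_mul_I t
    have hnorm : ‖e • κ'‖ = 1 := by
      rw [norm_smul, habs, hκ', one_mul]
    rw [← rho_phase P R l1 l2 hR hPspec hl2 hl12 Y κ' hκ' t, ← he]
    rw [abs_le]
    constructor
    · have h := rho_lip P R l1 l2 hR hPspec hl2 hl12 Y (e • κ') κ hnorm hκ
      rw [norm_sub_rev] at h
      linarith
    · have h := rho_lip P R l1 l2 hR hPspec hl2 hl12 Y κ (e • κ') hκ hnorm
      linarith
  have hKnn : (0:ℝ) ≤ 4*l1^2/l2*‖Y‖^2 := by positivity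
  have hpdnn : 0 ≤ pdist κ κ' := Real.iInf_nonneg fun t => norm_nonneg _
  have hstep : |rhoD P Y κ - rhoD P Y κ'| ≤ (4*l1^2/l2*‖Y‖^2) * pdist κ κ' := by
    rcases eq_or_lt_of_le hKnn with h0 | hK
    · have h := hbound 0
      rw [← h0] at h ⊢
      simp only [zero_mul] at h ⊢
      exact h
    · have hdiv : |rhoD P Y κ - rhoD P Y κ'| / (4*l1^2/l2*‖Y‖^2) ≤ pdist κ κ' := by
        unfold pdist
        refine le_ciInf fun t => ?_
        rw [div_le_iff₀ hK]
        calc |rhoD P Y κ - rhoD P Y κ'|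
            ≤ (4*l1^2/l2*‖Y‖^2) * ‖κ - Complex.exp (↑t * Complex.I) • κ'‖ := hbound t
          _ = ‖κ - Complex.exp (↑t * Complex.I) • κ'‖ * (4*l1^2/l2*‖Y‖^2) := by ring
      calc |rhoD P Y κ - rhoD P Y κ'|
          = |rhoD P Y κ - rhoD P Y κ'| / (4*l1^2/l2*‖Y‖^2) * (4*l1^2/l2*‖Y‖^2) :=
            (div_mul_cancel₀ _ hK.ne').symm
        _ ≤ pdist κ κ' * (4*l1^2/l2*‖Y‖^2) := mul_le_mul_of_nonneg_right hdiv hK.le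
        _ = (4*l1^2/l2*‖Y‖^2) * pdist κ κ' := by ring
  have hC := const_cmp l1 l2 N hN hl2 hl12
  calc |rhoD P Y κ - rhoD P Y κ'| ≤ (4*l1^2/l2*‖Y‖^2) * pdist κ κ' := hstep
    _ = (4*l1^2/l2) * ‖Y‖^2 * pdist κ κ' := by ring
    _ ≤ (Real.sqrt l1 * ((l1^2+l2^2)/(l1*l2)) *
          ((l1+2)*Real.sqrt (2*N) + 8*Real.sqrt 2*N + 32*Real.sqrt 2*N*(l1^2+l2^2)/(l1*l2)))
          * ‖Y‖^2 * pdist κ κ' :=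
        mul_le_mul_of_nonneg_right (mul_le_mul_of_nonneg_right hC hY2) hpdnn
end
end

section
/- Let ε = (ε₁,…,ε_N) be a random vector in ℂ^N with vec(ε_ν), 1 ≤ ν ≤ N, i.i.d. centered bivariate Gaussian with covariance matrix Σ (a 2×2 real symmetric positive definite matrix), and set P := Σ⁻¹. Then for every unit vector κ ∈ S_ℂ, E[ρ(ε,[κ])] = 2N − 2. -/
open scoped BigOperators Matrix ComplexOrder
open MeasureTheory Filter Matrix

noncomputable section

section AuxGauss
open Real ProbabilityTheory
open scoped NNReal ENNReal

lemma integral_sq_exp_neg_mul_sq {b : ℝ} (hb : 0 < b) :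
    ∫ x : ℝ, x ^ 2 * Real.exp (-b * x ^ 2) = b ^ (-(3:ℝ)/2) * (Real.sqrt π / 2) := by
  have h1 : ∀ x : ℝ, x ^ 2 * Real.exp (-b * x ^ 2) = |x| ^ 2 * Real.exp (-b * |x| ^ 2) := by
    intro x; rw [sq_abs]
  have h2 : (∫ x : ℝ, x ^ 2 * Real.exp (-b * x ^ 2))
      = 2 * ∫ x in Set.Ioi (0:ℝ), x ^ 2 * Real.exp (-b * x ^ 2) := by
    rw [← integral_comp_abs (f := fun x => x ^ 2 * Real.exp (-b * x ^ 2))]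
    exact integral_congr_ae (Filter.Eventually.of_forall h1)
  rw [h2]
  have h3 : ∫ x in Set.Ioi (0:ℝ), x ^ 2 * Real.exp (-b * x ^ 2)
      = ∫ x in Set.Ioi (0:ℝ), x ^ (2:ℝ) * Real.exp (-b * x ^ (2:ℝ)) := by
    refine setIntegral_congr_fun measurableSet_Ioi (fun x hx => ?_)
    rw [← Real.rpow_natCast x 2]; norm_num
  rw [h3, integral_rpow_mul_exp_neg_mul_rpow two_pos (by norm_num) hb]
  have : Real.Gamma ((2 + 1) / 2) = Real.sqrt π / 2 := by
    have : ((2:ℝ) + 1)/2 = 1/2 + 1 := by norm_num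
    rw [this, Real.Gamma_add_one (by norm_num), Real.Gamma_one_half_eq]
    ring
  rw [this]
  ring_nf

lemma gaussianPDFReal_zero_eq (v : ℝ≥0) (x : ℝ) :
    gaussianPDFReal 0 v x = (Real.sqrt (2 * π * v))⁻¹ * Real.exp (-(2 * (v:ℝ))⁻¹ * x ^ 2) := by
  rw [gaussianPDFReal]
  congr 1
  · congr 1
    rw [sub_zero]
    by_cases hv : (v:ℝ) = 0
    · simp [hv]
    field_simp

lemma integrable_sq_gaussianReal (v : ℝ≥0) :
    Integrable (fun x : ℝ => x ^ 2) (gaussianReal 0 v) := by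
  by_cases hv : v = 0
  · simp only [hv, gaussianReal_zero_var]
    constructor
    · exact (measurable_id.pow_const 2).aestronglyMeasurable
    · rw [hasFiniteIntegral_def, lintegral_dirac' _ (by measurability)]
      simp
  rw [gaussianReal_of_var_ne_zero _ hv]
  refine (integrable_withDensity_iff (measurable_gaussianPDF _ _)
      (Filter.Eventually.of_forall fun x => ENNReal.ofReal_lt_top)).2 ?_
  have hb : 0 < ((2:ℝ) * v)⁻¹ := by positivity
  have : (fun x : ℝ => x ^ 2 * (gaussianPDF 0 v x).toReal)
      = fun x : ℝ => (Real.sqrt (2 * π * v))⁻¹ * (x ^ (2:ℝ) * Real.exp (-((2 * (v:ℝ))⁻¹) * x ^ 2)) := by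
    ext x
    rw [gaussianPDF, ENNReal.toReal_ofReal (gaussianPDFReal_nonneg _ _ _), gaussianPDFReal_zero_eq,
      ← Real.rpow_natCast x 2]
    push_cast
    ring
  rw [this]
  exact ((integrable_rpow_mul_exp_neg_mul_sq hb (by norm_num)).const_mul _)

lemma integral_sq_gaussianReal (v : ℝ≥0) :
    ∫ x : ℝ, x ^ 2 ∂(gaussianReal 0 v) = v := by
  by_cases hv : v = 0
  · simp [hv]
  rw [gaussianReal_of_var_ne_zero _ hv]
  have : gaussianPDF 0 v = fun x => ((Real.toNNReal (gaussianPDFReal 0 v x) : ℝ≥0) : ℝ≥0∞) := rfl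
  rw [this, integral_withDensity_eq_integral_smul
    ((measurable_gaussianPDFReal 0 v).real_toNNReal) (fun x : ℝ => x ^ 2)]
  have hv' : (0:ℝ) < v := by positivity
  have hb : 0 < ((2:ℝ) * v)⁻¹ := by positivity
  have : (fun x : ℝ => (Real.toNNReal (gaussianPDFReal 0 v x)) • x ^ 2)
      = fun x : ℝ => (Real.sqrt (2 * π * v))⁻¹ * (x ^ 2 * Real.exp (-((2 * (v:ℝ))⁻¹) * x ^ 2)) := by
    ext x
    rw [NNReal.smul_def, smul_eq_mul, Real.coe_toNNReal _ (gaussianPDFReal_nonneg _ _ _),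
      gaussianPDFReal_zero_eq]
    ring
  rw [this, integral_const_mul, integral_sq_exp_neg_mul_sq hb]
  have h2v : (0:ℝ) < 2 * v := by positivity
  rw [Real.inv_rpow h2v.le, ← Real.rpow_neg h2v.le, neg_div, neg_neg,
    show (3:ℝ)/2 = 1 + 1/2 by norm_num, Real.rpow_add h2v, Real.rpow_one,
    ← Real.sqrt_eq_rpow, show 2 * π * (v:ℝ) = π * (2 * v) by ring,
    Real.sqrt_mul pi_pos.le]
  have hπ : Real.sqrt π ≠ 0 := by positivity
  have h2v' : Real.sqrt (2 * v) ≠ 0 := by positivity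
  field_simp

lemma integrable_id_gaussianReal (v : ℝ≥0) :
    Integrable (fun x : ℝ => x) (gaussianReal 0 v) := by
  have h : Integrable (fun x : ℝ => 1 + x ^ 2) (gaussianReal 0 v) :=
    (integrable_const 1).add (integrable_sq_gaussianReal v)
  refine h.mono' measurable_id.aestronglyMeasurable ?_
  refine Filter.Eventually.of_forall fun x => ?_
  rw [Real.norm_eq_abs]
  nlinarith [sq_nonneg (|x| - 1), abs_nonneg x, sq_abs x]

lemma integral_id_gaussianReal_zero (v : ℝ≥0) :
    ∫ x : ℝ, x ∂(gaussianReal 0 v) = 0 := by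
  have hmap : Measure.map (fun x : ℝ => (-1 : ℝ) * x) (gaussianReal 0 v) = gaussianReal 0 v := by
    rw [gaussianReal_map_const_mul (-1)]
    norm_num
  have h := integrable_id_gaussianReal v
  have : ∫ x : ℝ, x ∂(gaussianReal 0 v)
      = ∫ x : ℝ, x ∂(Measure.map (fun x : ℝ => (-1 : ℝ) * x) (gaussianReal 0 v)) := by rw [hmap]
  rw [integral_map (f := fun x : ℝ => x) (by fun_prop) measurable_id.aestronglyMeasurable] at this
  rw [show (fun x : ℝ => -1 * x) = fun x : ℝ => -x by ext x; ring, integral_neg] at this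
  linarith

end AuxGauss

section AuxDet

-- helpers
lemma dot22 (A : Matrix (Fin 2) (Fin 2) ℝ) (x y : Fin 2 → ℝ) :
    x ⬝ᵥ (A *ᵥ y) = ∑ i, ∑ j, A i j * (x i * y j) := by
  simp [dotProduct, Matrix.mulVec, Fin.sum_univ_two]; ring

lemma vecC_sub (a b : ℂ) : vecC (a - b) = vecC a - vecC b := by
  funext i; fin_cases i <;> simp [vecC]

lemma MC_mulVec (z w : ℂ) : MC z *ᵥ vecC w = vecC (z * w) := by
  funext i; fin_cases i <;>
    simp [MC, vecC, Matrix.mulVec, dotProduct, Fin.sum_univ_two, Complex.mul_re,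
      Complex.mul_im] <;> ring

lemma vecC_eq_self (x : Fin 2 → ℝ) : vecC ((x 0 : ℝ) + (x 1 : ℝ) * Complex.I) = x := by
  funext i; fin_cases i <;> simp [vecC]

-- x ⬝ (A *ᵥ (M *ᵥ u)) = ((Mᵀ * Aᵀ) *ᵥ x) ⬝ u
lemma dot_mulVec_mulVec (A M : Matrix (Fin 2) (Fin 2) ℝ) (x u : Fin 2 → ℝ) :
    x ⬝ᵥ (A *ᵥ (M *ᵥ u)) = ((Mᵀ * Aᵀ) *ᵥ x) ⬝ᵥ u := by
  simp [dotProduct, Matrix.mulVec, Matrix.mul_apply, Fin.sum_univ_two,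
    Matrix.transpose_apply]; ring

-- (B *ᵥ (A *ᵥ x)) ⬝ᵥ (C *ᵥ y) = x ⬝ᵥ ((Aᵀ * Bᵀ * C) *ᵥ y)
lemma dot_triple (B A C : Matrix (Fin 2) (Fin 2) ℝ) (x y : Fin 2 → ℝ) :
    (B *ᵥ (A *ᵥ x)) ⬝ᵥ (C *ᵥ y) = x ⬝ᵥ ((Aᵀ * Bᵀ * C) *ᵥ y) := by
  simp [dotProduct, Matrix.mulVec, Matrix.mul_apply, Fin.sum_univ_two,
    Matrix.transpose_apply]; ring

-- (M *ᵥ x) ⬝ᵥ (P *ᵥ (M *ᵥ x)) = x ⬝ᵥ ((Mᵀ * P * M) *ᵥ x)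
lemma dot_sandwich (P M : Matrix (Fin 2) (Fin 2) ℝ) (x y : Fin 2 → ℝ) :
    (M *ᵥ x) ⬝ᵥ (P *ᵥ (M *ᵥ y)) = x ⬝ᵥ ((Mᵀ * P * M) *ᵥ y) := by
  simp [dotProduct, Matrix.mulVec, Matrix.mul_apply, Fin.sum_univ_two,
    Matrix.transpose_apply]; ring

lemma sum_mulVec22 {ι : Type*} (s : Finset ι) (f : ι → Matrix (Fin 2) (Fin 2) ℝ)
    (x : Fin 2 → ℝ) : (∑ ν ∈ s, f ν) *ᵥ x = ∑ ν ∈ s, f ν *ᵥ x := by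
  ext i
  simp only [Matrix.mulVec, dotProduct, Matrix.sum_apply, Finset.sum_apply, Finset.sum_mul]
  rw [Finset.sum_comm]

lemma dotProduct_sum22 {ι : Type*} (s : Finset ι) (x : Fin 2 → ℝ) (f : ι → Fin 2 → ℝ) :
    x ⬝ᵥ (∑ ν ∈ s, f ν) = ∑ ν ∈ s, x ⬝ᵥ f ν := by
  simp only [dotProduct, Finset.sum_apply, Finset.mul_sum]
  rw [Finset.sum_comm]

lemma sum_dotProduct22 {ι : Type*} (s : Finset ι) (f : ι → Fin 2 → ℝ) (x : Fin 2 → ℝ) :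
    (∑ ν ∈ s, f ν) ⬝ᵥ x = ∑ ν ∈ s, f ν ⬝ᵥ x := by
  simp only [dotProduct, Finset.sum_apply, Finset.sum_mul]
  rw [Finset.sum_comm]

section posdef
variable {N : ℕ} {P : Matrix (Fin 2) (Fin 2) ℝ}

lemma star_triv (x : Fin 2 → ℝ) : star x = x := by funext i; simp

lemma pd_dot_nonneg (hP : P.PosSemidef) (x : Fin 2 → ℝ) : 0 ≤ x ⬝ᵥ (P *ᵥ x) := by
  have := hP.dotProduct_mulVec_nonneg x; rwa [star_triv] at this

lemma pd_dot_pos (hP : P.PosDef) {x : Fin 2 → ℝ} (hx : x ≠ 0) : 0 < x ⬝ᵥ (P *ᵥ x) := by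
  have := (posDef_iff_dotProduct_mulVec.1 hP).2 hx; rwa [star_triv] at this

lemma MC_mulVec_ne_zero {z : ℂ} (hz : z ≠ 0) {x : Fin 2 → ℝ} (hx : x ≠ 0) :
    MC z *ᵥ x ≠ 0 := by
  intro h
  have hx' : x = vecC ((x 0 : ℝ) + (x 1 : ℝ) * Complex.I) := (vecC_eq_self x).symm
  set w : ℂ := (x 0 : ℝ) + (x 1 : ℝ) * Complex.I with hw
  rw [hx', MC_mulVec] at h
  have hzw : z * w = 0 := by
    have h0 := congrFun h 0
    have h1 := congrFun h 1
    simp [vecC] at h0 h1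
    exact Complex.ext h0 h1
  rcases mul_eq_zero.1 hzw with h' | h'
  · exact hz h'
  · apply hx
    rw [hx', h']
    funext i; fin_cases i <;> simp [vecC]

lemma diaA_posdef (hP : P.PosDef) {κ : CVec N} (hκ : κ ≠ 0) : (diaA P κ κ).PosDef := by
  obtain ⟨ν₀, hν₀⟩ : ∃ ν, κ ν ≠ 0 := by
    by_contra h
    push_neg at h
    exact hκ (by ext ν; simpa using h ν)
  refine posDef_iff_dotProduct_mulVec.2 ⟨?_, ?_⟩
  · -- IsHermitian
    have hPh : Pᵀ = P := hP.isHermitian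
    show (diaA P κ κ)ᴴ = diaA P κ κ
    have : (diaA P κ κ)ᴴ = (diaA P κ κ)ᵀ := rfl
    rw [this, diaA]
    rw [Matrix.transpose_sum]
    refine Finset.sum_congr rfl fun ν _ => ?_
    rw [Matrix.transpose_mul, Matrix.transpose_mul, Matrix.transpose_transpose, hPh, Matrix.mul_assoc]
  · intro x hx
    rw [star_triv]
    have hexp : x ⬝ᵥ (diaA P κ κ *ᵥ x)
        = ∑ ν, (MC (κ ν) *ᵥ x) ⬝ᵥ (P *ᵥ (MC (κ ν) *ᵥ x)) := by
      rw [diaA, sum_mulVec22, dotProduct_sum22]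
      exact Finset.sum_congr rfl fun ν _ => (dot_sandwich P (MC (κ ν)) x x).symm
    rw [hexp]
    refine Finset.sum_pos' (fun ν _ => pd_dot_nonneg hP.posSemidef _) ⟨ν₀, Finset.mem_univ _, ?_⟩
    exact pd_dot_pos hP (MC_mulVec_ne_zero hν₀ hx)

end posdef

lemma expand_quad (P M : Matrix (Fin 2) (Fin 2) ℝ) (hsym : Pᵀ = P) (x u : Fin 2 → ℝ) :
    (x - M *ᵥ u) ⬝ᵥ (P *ᵥ (x - M *ᵥ u))
      = x ⬝ᵥ (P *ᵥ x) - 2 * (((Mᵀ * P) *ᵥ x) ⬝ᵥ u) + (M *ᵥ u) ⬝ᵥ (P *ᵥ (M *ᵥ u)) := by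
  have h : P 1 0 = P 0 1 := by
    have := congrFun (congrFun hsym 0) 1
    simpa using this
  simp only [dotProduct, Matrix.mulVec, Matrix.mul_apply, Fin.sum_univ_two,
    Matrix.transpose_apply, Pi.sub_apply]
  rw [h]; ring

lemma vecC_phiHat {N : ℕ} (κ : CVec N) (P : Matrix (Fin 2) (Fin 2) ℝ) (Y : CVec N) :
    vecC (phiHat κ P Y) = (diaA P κ κ)⁻¹ *ᵥ bulA P κ Y := by
  funext i; fin_cases i <;> simp [phiHat, vecC]

lemma iprA_self_nonneg {N : ℕ} {P : Matrix (Fin 2) (Fin 2) ℝ} (hP : P.PosDef) (z : CVec N) :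
    0 ≤ iprA P z z :=
  Finset.sum_nonneg fun ν _ => pd_dot_nonneg hP.posSemidef _

lemma rhoD_eq {N : ℕ} {P : Matrix (Fin 2) (Fin 2) ℝ} (hP : P.PosDef)
    {κ : CVec N} (hκ : κ ≠ 0) (Y : CVec N) :
    rhoD P Y κ = iprA P Y Y
      - ((diaA P κ κ)⁻¹ *ᵥ bulA P κ Y) ⬝ᵥ bulA P κ Y := by
  classical
  set G := diaA P κ κ with hGdef
  set b := bulA P κ Y with hbdef
  set vφ : Fin 2 → ℝ := G⁻¹ *ᵥ b with hvφ
  have hGpd : G.PosDef := diaA_posdef hP hκ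
  have hGinv : G * G⁻¹ = 1 :=
    Matrix.mul_nonsing_inv G (isUnit_iff_ne_zero.2 (ne_of_gt hGpd.det_pos))
  have hPsym : Pᵀ = P := hP.isHermitian
  have hsubν : ∀ ν, vecC ((Y - phiHat κ P Y • κ) ν)
      = vecC (Y ν) - MC (κ ν) *ᵥ vφ := by
    intro ν
    have h1 : (Y - phiHat κ P Y • κ) ν = Y ν - phiHat κ P Y * κ ν := by
      simp [smul_eq_mul]
    rw [h1, vecC_sub]
    congr 1
    rw [hvφ, hGdef, hbdef, ← vecC_phiHat, MC_mulVec, mul_comm]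
  have hexp : iprA P (Y - phiHat κ P Y • κ) (Y - phiHat κ P Y • κ)
      = iprA P Y Y - 2 * (b ⬝ᵥ vφ) + vφ ⬝ᵥ (G *ᵥ vφ) := by
    rw [iprA]
    have hpt : ∀ ν : Fin N, vecC ((Y - phiHat κ P Y • κ) ν) ⬝ᵥ (P *ᵥ vecC ((Y - phiHat κ P Y • κ) ν))
        = vecC (Y ν) ⬝ᵥ (P *ᵥ vecC (Y ν))
          - 2 * ((((MC (κ ν))ᵀ * P) *ᵥ vecC (Y ν)) ⬝ᵥ vφ)
          + vφ ⬝ᵥ (((MC (κ ν))ᵀ * P * MC (κ ν)) *ᵥ vφ) := by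
      intro ν
      rw [hsubν ν, expand_quad P (MC (κ ν)) hPsym, dot_sandwich]
    rw [Finset.sum_congr rfl fun ν _ => hpt ν, Finset.sum_add_distrib, Finset.sum_sub_distrib,
      ← Finset.mul_sum]
    have e1 : b ⬝ᵥ vφ = ∑ ν, (((MC (κ ν))ᵀ * P) *ᵥ vecC (Y ν)) ⬝ᵥ vφ := by
      rw [hbdef, bulA, sum_dotProduct22]
    have e2 : vφ ⬝ᵥ (G *ᵥ vφ) = ∑ ν, vφ ⬝ᵥ (((MC (κ ν))ᵀ * P * MC (κ ν)) *ᵥ vφ) := by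
      rw [hGdef, diaA, sum_mulVec22, dotProduct_sum22]
    rw [← e1, ← e2, iprA]
  have hq : 0 ≤ iprA P (Y - phiHat κ P Y • κ) (Y - phiHat κ P Y • κ) :=
    iprA_self_nonneg hP _
  rw [rhoD, dMah, Real.sq_sqrt hq, hexp]
  have h3 : vφ ⬝ᵥ (G *ᵥ vφ) = vφ ⬝ᵥ b := by
    rw [hvφ, Matrix.mulVec_mulVec, hGinv, Matrix.one_mulVec]
  have h4 : b ⬝ᵥ vφ = vφ ⬝ᵥ b := dotProduct_comm _ _
  rw [h3, h4]
  ring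

lemma mulVec_sum22 {ι : Type*} (s : Finset ι) (A : Matrix (Fin 2) (Fin 2) ℝ)
    (f : ι → Fin 2 → ℝ) : A *ᵥ (∑ ν ∈ s, f ν) = ∑ ν ∈ s, A *ᵥ f ν := by
  ext i
  simp only [Matrix.mulVec, dotProduct, Finset.sum_apply, Finset.mul_sum]
  rw [Finset.sum_comm]

def Dmat {N : ℕ} (P : Matrix (Fin 2) (Fin 2) ℝ) (κ : CVec N) (ν μ : Fin N) :
    Matrix (Fin 2) (Fin 2) ℝ :=
  ((MC (κ ν))ᵀ * P)ᵀ * ((diaA P κ κ)⁻¹)ᵀ * ((MC (κ μ))ᵀ * P)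

lemma bilin_expand {N : ℕ} (P : Matrix (Fin 2) (Fin 2) ℝ) (κ Y : CVec N) :
    ((diaA P κ κ)⁻¹ *ᵥ bulA P κ Y) ⬝ᵥ bulA P κ Y
      = ∑ ν, ∑ μ, vecC (Y ν) ⬝ᵥ (Dmat P κ ν μ *ᵥ vecC (Y μ)) := by
  rw [bulA, mulVec_sum22, sum_dotProduct22]
  refine Finset.sum_congr rfl fun ν _ => ?_
  rw [dotProduct_sum22]
  refine Finset.sum_congr rfl fun μ _ => ?_
  rw [dot_triple]
  rfl

lemma trace_form (B Sig : Matrix (Fin 2) (Fin 2) ℝ) :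
    ∑ i, ∑ j, B i j * Sig i j = Matrix.trace (B * Sigᵀ) := by
  simp [Matrix.trace, Matrix.diag, Matrix.mul_apply, Fin.sum_univ_two]

section traces
variable {N : ℕ} {Sig P : Matrix (Fin 2) (Fin 2) ℝ}

lemma PSig_one (hSig : Sig.PosDef) (hP : P = Sig⁻¹) : P * Sig = 1 := by
  rw [hP]
  exact Matrix.nonsing_inv_mul Sig (isUnit_iff_ne_zero.2 (ne_of_gt hSig.det_pos))

lemma trace_P_Sig (hSig : Sig.PosDef) (hP : P = Sig⁻¹) : Matrix.trace (P * Sigᵀ) = 2 := by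
  have hSigT : Sigᵀ = Sig := hSig.isHermitian
  rw [hSigT, PSig_one hSig hP]
  simp [Matrix.trace_one]

lemma sum_trace_Dmat (hSig : Sig.PosDef) (hP : P = Sig⁻¹) {κ : CVec N} (hκ : κ ≠ 0) :
    ∑ ν, Matrix.trace (Dmat P κ ν ν * Sigᵀ) = 2 := by
  have hPpd : P.PosDef := hP ▸ hSig.inv
  have hSigT : Sigᵀ = Sig := hSig.isHermitian
  have hPsym : Pᵀ = P := hPpd.isHermitian
  have hGpd : (diaA P κ κ).PosDef := diaA_posdef hPpd hκ
  have hGu : IsUnit (diaA P κ κ).det := isUnit_iff_ne_zero.2 (ne_of_gt hGpd.det_pos)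
  have hGsym : (diaA P κ κ)ᵀ = diaA P κ κ := hGpd.isHermitian
  have hGinvT : ((diaA P κ κ)⁻¹)ᵀ = (diaA P κ κ)⁻¹ := by
    rw [Matrix.transpose_nonsing_inv, hGsym]
  have hPS : P * Sig = 1 := PSig_one hSig hP
  have hstep : ∀ ν : Fin N, Dmat P κ ν ν * Sigᵀ
      = P * MC (κ ν) * (diaA P κ κ)⁻¹ * (MC (κ ν))ᵀ := by
    intro ν
    rw [Dmat, hGinvT, Matrix.transpose_mul, Matrix.transpose_transpose, hPsym, hSigT]
    calc P * MC (κ ν) * (diaA P κ κ)⁻¹ * ((MC (κ ν))ᵀ * P) * Sig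
        = P * MC (κ ν) * (diaA P κ κ)⁻¹ * (MC (κ ν))ᵀ * (P * Sig) := by
          simp only [Matrix.mul_assoc]
      _ = P * MC (κ ν) * (diaA P κ κ)⁻¹ * (MC (κ ν))ᵀ := by
          rw [hPS, Matrix.mul_one]
  have hcyc : ∀ ν : Fin N,
      Matrix.trace (P * MC (κ ν) * (diaA P κ κ)⁻¹ * (MC (κ ν))ᵀ)
        = Matrix.trace (((MC (κ ν))ᵀ * P * MC (κ ν)) * (diaA P κ κ)⁻¹) := by
    intro ν
    rw [Matrix.trace_mul_comm]
    simp only [Matrix.mul_assoc]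
  calc ∑ ν, Matrix.trace (Dmat P κ ν ν * Sigᵀ)
      = ∑ ν, Matrix.trace (((MC (κ ν))ᵀ * P * MC (κ ν)) * (diaA P κ κ)⁻¹) := by
        refine Finset.sum_congr rfl fun ν _ => ?_
        rw [hstep ν, hcyc ν]
    _ = Matrix.trace ((∑ ν, (MC (κ ν))ᵀ * P * MC (κ ν)) * (diaA P κ κ)⁻¹) := by
        rw [Finset.sum_mul, Matrix.trace_sum]
    _ = 2 := by
        rw [show (∑ ν, (MC (κ ν))ᵀ * P * MC (κ ν)) = diaA P κ κ from rfl,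
          Matrix.mul_nonsing_inv _ hGu]
        simp [Matrix.trace_one]

end traces

lemma single_dot (x : Fin 2 → ℝ) (i : Fin 2) : Pi.single i (1:ℝ) ⬝ᵥ x = x i := by
  fin_cases i <;> simp [dotProduct, Pi.single_apply, Fin.sum_univ_two]

lemma polar_coeff {Sig : Matrix (Fin 2) (Fin 2) ℝ} (hsym : Sig 1 0 = Sig 0 1) (i j : Fin 2) :
    ((Pi.single i (1:ℝ) + Pi.single j 1) ⬝ᵥ (Sig *ᵥ (Pi.single i 1 + Pi.single j 1))
      - Pi.single i (1:ℝ) ⬝ᵥ (Sig *ᵥ Pi.single i 1)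
      - Pi.single j (1:ℝ) ⬝ᵥ (Sig *ᵥ Pi.single j 1)) / 2 = Sig i j := by
  fin_cases i <;> fin_cases j <;>
    simp [dotProduct, Matrix.mulVec, Fin.sum_univ_two, Pi.single_apply] <;>
    first
      | rfl
      | linarith

end AuxDet

/-- for i.i.d. centered bivariate Gaussian noise `vec(ε_ν) ~ N(0,Σ)` and
`P = Σ⁻¹`, the expected loss is `E[ρ(ε,[κ])] = 2N − 2` for every unit `κ`. -/
theorem expected_rho_of_noise {N : ℕ}
    {Ω : Type*} [MeasurableSpace Ω] (Pm : Measure Ω) [IsProbabilityMeasure Pm]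
    (Sig P : Matrix (Fin 2) (Fin 2) ℝ) (hSig : Sig.PosDef) (hP : P = Sig⁻¹)
    (ε : Ω → CVec N)
    (hεmeas : ∀ ν : Fin N, Measurable fun ω => vecC (ε ω ν))
    (hεindep : ProbabilityTheory.iIndepFun
      (fun ν ω => vecC (ε ω ν)) Pm)
    (hεgauss : ∀ (ν : Fin N) (u : Fin 2 → ℝ),
      Measure.map (fun ω => u ⬝ᵥ vecC (ε ω ν)) Pm =
        ProbabilityTheory.gaussianReal 0 (u ⬝ᵥ Sig *ᵥ u).toNNReal)
    (κ : CVec N) (hκ : ‖κ‖ = 1) :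
    ∫ ω, rhoD P (ε ω) κ ∂Pm = 2 * N - 2 := by
  classical
  have hPpd : P.PosDef := hP ▸ hSig.inv
  have hκ0 : κ ≠ 0 := by
    intro h; rw [h, norm_zero] at hκ; norm_num at hκ
  have hSigsym : Sig 1 0 = Sig 0 1 := by
    have h : Sigᵀ = Sig := hSig.isHermitian
    exact congrFun (congrFun h 0) 1
  -- measurability
  have measComp : ∀ (ν : Fin N) (i : Fin 2), Measurable fun ω => vecC (ε ω ν) i :=
    fun ν i => (measurable_pi_apply i).comp (hεmeas ν)
  have measDot : ∀ (ν : Fin N) (u : Fin 2 → ℝ),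
      Measurable fun ω => u ⬝ᵥ vecC (ε ω ν) := by
    intro ν u
    simp only [dotProduct]
    exact Finset.measurable_sum _ fun i _ => (measComp ν i).const_mul _
  -- second moments of linear functionals
  have sqInt : ∀ (ν : Fin N) (u : Fin 2 → ℝ),
      Integrable (fun ω => (u ⬝ᵥ vecC (ε ω ν)) ^ 2) Pm := by
    intro ν u
    have h1 := integrable_sq_gaussianReal ((u ⬝ᵥ Sig *ᵥ u).toNNReal)
    rw [← hεgauss ν u] at h1
    have h2 := (integrable_map_measure (measurable_id.pow_const 2).aestronglyMeasurable
      (measDot ν u).aemeasurable).1 h1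
    exact h2
  have sqVal : ∀ (ν : Fin N) (u : Fin 2 → ℝ),
      ∫ ω, (u ⬝ᵥ vecC (ε ω ν)) ^ 2 ∂Pm = u ⬝ᵥ Sig *ᵥ u := by
    intro ν u
    have hnn : 0 ≤ u ⬝ᵥ Sig *ᵥ u := pd_dot_nonneg hSig.posSemidef u
    have h1 : ∫ x, x ^ 2 ∂(Measure.map (fun ω => u ⬝ᵥ vecC (ε ω ν)) Pm)
        = ∫ ω, (u ⬝ᵥ vecC (ε ω ν)) ^ 2 ∂Pm :=
      integral_map (measDot ν u).aemeasurable
        (measurable_id.pow_const 2).aestronglyMeasurable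
    rw [← h1, hεgauss ν u, integral_sq_gaussianReal, Real.coe_toNNReal _ hnn]
  -- means
  have meanInt : ∀ (ν : Fin N) (i : Fin 2),
      Integrable (fun ω => vecC (ε ω ν) i) Pm := by
    intro ν i
    have h1 := integrable_id_gaussianReal
      ((Pi.single i (1:ℝ) ⬝ᵥ Sig *ᵥ Pi.single i 1).toNNReal)
    rw [← hεgauss ν (Pi.single i 1)] at h1
    have h2 := (integrable_map_measure measurable_id.aestronglyMeasurable
      (measDot ν (Pi.single i 1)).aemeasurable).1 h1
    refine h2.congr (Filter.Eventually.of_forall fun ω => ?_)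
    simpa using single_dot (vecC (ε ω ν)) i
  have meanVal : ∀ (ν : Fin N) (i : Fin 2), ∫ ω, vecC (ε ω ν) i ∂Pm = 0 := by
    intro ν i
    have h1 : ∫ ω, vecC (ε ω ν) i ∂Pm
        = ∫ ω, Pi.single i (1:ℝ) ⬝ᵥ vecC (ε ω ν) ∂Pm :=
      integral_congr_ae (Filter.Eventually.of_forall fun ω => (single_dot _ i).symm)
    have h2 : ∫ x, x ∂(Measure.map (fun ω => Pi.single i (1:ℝ) ⬝ᵥ vecC (ε ω ν)) Pm)
        = ∫ ω, Pi.single i (1:ℝ) ⬝ᵥ vecC (ε ω ν) ∂Pm :=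
      integral_map (measDot ν (Pi.single i 1)).aemeasurable
        measurable_id.aestronglyMeasurable
    rw [h1, ← h2, hεgauss ν (Pi.single i 1), integral_id_gaussianReal_zero]
  -- same-index products
  have polar : ∀ (ν : Fin N) (i j : Fin 2) (ω : Ω),
      vecC (ε ω ν) i * vecC (ε ω ν) j
        = (((Pi.single i (1:ℝ) + Pi.single j 1) ⬝ᵥ vecC (ε ω ν)) ^ 2
            - (Pi.single i (1:ℝ) ⬝ᵥ vecC (ε ω ν)) ^ 2
            - (Pi.single j (1:ℝ) ⬝ᵥ vecC (ε ω ν)) ^ 2) / 2 := by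
    intro ν i j ω
    rw [add_dotProduct, single_dot, single_dot]
    ring
  have prodInt : ∀ (ν : Fin N) (i j : Fin 2),
      Integrable (fun ω => vecC (ε ω ν) i * vecC (ε ω ν) j) Pm := by
    intro ν i j
    have h := (((sqInt ν (Pi.single i 1 + Pi.single j 1)).sub
      (sqInt ν (Pi.single i 1))).sub (sqInt ν (Pi.single j 1))).div_const 2
    exact h.congr (Filter.Eventually.of_forall fun ω => (polar ν i j ω).symm)
  have prodVal : ∀ (ν : Fin N) (i j : Fin 2),
      ∫ ω, vecC (ε ω ν) i * vecC (ε ω ν) j ∂Pm = Sig i j := by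
    intro ν i j
    have hA := sqInt ν (Pi.single i 1 + Pi.single j 1)
    have hB := sqInt ν (Pi.single i 1)
    have hC := sqInt ν (Pi.single j 1)
    have e0 : ∫ ω, vecC (ε ω ν) i * vecC (ε ω ν) j ∂Pm
        = (∫ ω, (((Pi.single i (1:ℝ) + Pi.single j 1) ⬝ᵥ vecC (ε ω ν)) ^ 2
            - (Pi.single i (1:ℝ) ⬝ᵥ vecC (ε ω ν)) ^ 2
            - (Pi.single j (1:ℝ) ⬝ᵥ vecC (ε ω ν)) ^ 2) ∂Pm) / 2 := by
      rw [integral_congr_ae (Filter.Eventually.of_forall (polar ν i j)), integral_div]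
    have e1 : ∫ ω, (((Pi.single i (1:ℝ) + Pi.single j 1) ⬝ᵥ vecC (ε ω ν)) ^ 2
          - (Pi.single i (1:ℝ) ⬝ᵥ vecC (ε ω ν)) ^ 2
          - (Pi.single j (1:ℝ) ⬝ᵥ vecC (ε ω ν)) ^ 2) ∂Pm
        = (∫ ω, (((Pi.single i (1:ℝ) + Pi.single j 1) ⬝ᵥ vecC (ε ω ν)) ^ 2
            - (Pi.single i (1:ℝ) ⬝ᵥ vecC (ε ω ν)) ^ 2) ∂Pm)
          - ∫ ω, (Pi.single j (1:ℝ) ⬝ᵥ vecC (ε ω ν)) ^ 2 ∂Pm :=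
      integral_sub (hA.sub hB) hC
    have e2 : ∫ ω, (((Pi.single i (1:ℝ) + Pi.single j 1) ⬝ᵥ vecC (ε ω ν)) ^ 2
          - (Pi.single i (1:ℝ) ⬝ᵥ vecC (ε ω ν)) ^ 2) ∂Pm
        = (∫ ω, ((Pi.single i (1:ℝ) + Pi.single j 1) ⬝ᵥ vecC (ε ω ν)) ^ 2 ∂Pm)
          - ∫ ω, (Pi.single i (1:ℝ) ⬝ᵥ vecC (ε ω ν)) ^ 2 ∂Pm :=
      integral_sub hA hB
    rw [e0, e1, e2, sqVal, sqVal, sqVal]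
    exact polar_coeff hSigsym i j
  -- cross products
  have pairInt : ∀ (ν μ : Fin N) (i j : Fin 2),
      Integrable (fun ω => vecC (ε ω ν) i * vecC (ε ω μ) j) Pm := by
    intro ν μ i j
    by_cases h : ν = μ
    · subst h; exact prodInt ν i j
    · have hind := (hεindep.indepFun h).comp
        (measurable_pi_apply i) (measurable_pi_apply j)
      exact hind.integrable_mul (meanInt ν i) (meanInt μ j)
  have pairVal : ∀ (ν μ : Fin N) (i j : Fin 2),
      ∫ ω, vecC (ε ω ν) i * vecC (ε ω μ) j ∂Pm = if ν = μ then Sig i j else 0 := by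
    intro ν μ i j
    by_cases h : ν = μ
    · subst h; rw [if_pos rfl]; exact prodVal ν i j
    · rw [if_neg h]
      have hind := (hεindep.indepFun h).comp
        (measurable_pi_apply i) (measurable_pi_apply j)
      calc ∫ ω, vecC (ε ω ν) i * vecC (ε ω μ) j ∂Pm
          = (∫ ω, vecC (ε ω ν) i ∂Pm) * ∫ ω, vecC (ε ω μ) j ∂Pm :=
            ProbabilityTheory.IndepFun.integral_mul_eq_mul_integral hind (meanInt ν i).aestronglyMeasurable
              (meanInt μ j).aestronglyMeasurable
        _ = 0 := by rw [meanVal ν i, meanVal μ j, mul_zero]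
  -- pointwise expansion of rhoD
  have hpt : ∀ ω, rhoD P (ε ω) κ
      = (∑ ν, ∑ i, ∑ j, P i j * (vecC (ε ω ν) i * vecC (ε ω ν) j))
        - ∑ ν, ∑ μ, ∑ i, ∑ j, Dmat P κ ν μ i j * (vecC (ε ω ν) i * vecC (ε ω μ) j) := by
    intro ω
    rw [rhoD_eq hPpd hκ0 (ε ω), bilin_expand]
    congr 1
    · rw [iprA]
      exact Finset.sum_congr rfl fun ν _ => dot22 P _ _
    · exact Finset.sum_congr rfl fun ν _ => Finset.sum_congr rfl fun μ _ => dot22 _ _ _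
  have int1 : Integrable
      (fun ω => ∑ ν, ∑ i, ∑ j, P i j * (vecC (ε ω ν) i * vecC (ε ω ν) j)) Pm :=
    integrable_finset_sum _ fun ν _ => integrable_finset_sum _ fun i _ =>
      integrable_finset_sum _ fun j _ => (prodInt ν i j).const_mul _
  have int2 : Integrable
      (fun ω => ∑ ν, ∑ μ, ∑ i, ∑ j,
        Dmat P κ ν μ i j * (vecC (ε ω ν) i * vecC (ε ω μ) j)) Pm :=
    integrable_finset_sum _ fun ν _ => integrable_finset_sum _ fun μ _ =>
      integrable_finset_sum _ fun i _ => integrable_finset_sum _ fun j _ =>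
        (pairInt ν μ i j).const_mul _
  have val1 : ∫ ω, (∑ ν, ∑ i, ∑ j,
      P i j * (vecC (ε ω ν) i * vecC (ε ω ν) j)) ∂Pm = 2 * N := by
    rw [integral_finset_sum _ fun ν _ => integrable_finset_sum _ fun i _ =>
      integrable_finset_sum _ fun j _ => (prodInt ν i j).const_mul (P i j)]
    have hν : ∀ ν : Fin N, ∫ ω, (∑ i, ∑ j,
        P i j * (vecC (ε ω ν) i * vecC (ε ω ν) j)) ∂Pm = (2:ℝ) := by
      intro ν
      rw [integral_finset_sum _ fun i _ =>
        integrable_finset_sum _ fun j _ => (prodInt ν i j).const_mul (P i j)]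
      have : ∀ i : Fin 2, ∫ ω, (∑ j, P i j * (vecC (ε ω ν) i * vecC (ε ω ν) j)) ∂Pm
          = ∑ j, P i j * Sig i j := by
        intro i
        rw [integral_finset_sum _ fun j _ => (prodInt ν i j).const_mul (P i j)]
        refine Finset.sum_congr rfl fun j _ => ?_
        rw [integral_const_mul, prodVal ν i j]
      rw [Finset.sum_congr rfl fun i _ => this i, trace_form P Sig, trace_P_Sig hSig hP]
    rw [Finset.sum_congr rfl fun ν _ => hν ν, Finset.sum_const, Finset.card_univ,
      Fintype.card_fin, nsmul_eq_mul]
    ring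
  have val2 : ∫ ω, (∑ ν, ∑ μ, ∑ i, ∑ j,
      Dmat P κ ν μ i j * (vecC (ε ω ν) i * vecC (ε ω μ) j)) ∂Pm = 2 := by
    rw [integral_finset_sum _ fun ν _ => integrable_finset_sum _ fun μ _ =>
      integrable_finset_sum _ fun i _ => integrable_finset_sum _ fun j _ =>
        (pairInt ν μ i j).const_mul (Dmat P κ ν μ i j)]
    have hν : ∀ ν : Fin N, ∫ ω, (∑ μ, ∑ i, ∑ j,
        Dmat P κ ν μ i j * (vecC (ε ω ν) i * vecC (ε ω μ) j)) ∂Pm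
        = Matrix.trace (Dmat P κ ν ν * Sigᵀ) := by
      intro ν
      rw [integral_finset_sum _ fun μ _ => integrable_finset_sum _ fun i _ =>
        integrable_finset_sum _ fun j _ => (pairInt ν μ i j).const_mul (Dmat P κ ν μ i j)]
      have hμ : ∀ μ : Fin N, ∫ ω, (∑ i, ∑ j,
          Dmat P κ ν μ i j * (vecC (ε ω ν) i * vecC (ε ω μ) j)) ∂Pm
          = ∑ i, ∑ j, Dmat P κ ν μ i j * (if ν = μ then Sig i j else 0) := by
        intro μ
        rw [integral_finset_sum _ fun i _ =>
          integrable_finset_sum _ fun j _ => (pairInt ν μ i j).const_mul (Dmat P κ ν μ i j)]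
        refine Finset.sum_congr rfl fun i _ => ?_
        rw [integral_finset_sum _ fun j _ => (pairInt ν μ i j).const_mul (Dmat P κ ν μ i j)]
        refine Finset.sum_congr rfl fun j _ => ?_
        rw [integral_const_mul, pairVal ν μ i j]
      rw [Finset.sum_congr rfl fun μ _ => hμ μ]
      rw [Finset.sum_eq_single ν]
      · simp only [eq_self_iff_true, if_true]
        exact trace_form _ Sig
      · intro μ _ hμν
        have hne : ν ≠ μ := fun hh => hμν hh.symm
        simp [hne]
      · intro hν'
        exact absurd (Finset.mem_univ ν) hν'
    rw [Finset.sum_congr rfl fun ν _ => hν ν, sum_trace_Dmat hSig hP hκ0]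
  calc ∫ ω, rhoD P (ε ω) κ ∂Pm
      = ∫ ω, ((∑ ν, ∑ i, ∑ j, P i j * (vecC (ε ω ν) i * vecC (ε ω ν) j))
        - ∑ ν, ∑ μ, ∑ i, ∑ j,
            Dmat P κ ν μ i j * (vecC (ε ω ν) i * vecC (ε ω μ) j)) ∂Pm :=
        integral_congr_ae (Filter.Eventually.of_forall hpt)
    _ = (2 * N : ℝ) - 2 := by rw [integral_sub int1 int2, val1, val2]
end
end

section
/- Let P be a 2×2 real symmetric positive definite matrix, written P = R diag(λ₁,λ₂) Rᵀ with R a rotation matrix and λ₁ ≥ λ₂ > 0, and let P̃ := R diag(λ₂,λ₁) Rᵀ. Then for every unit vector κ ∈ S_ℂ in ℂ^N, (κ ⋄_P κ)⁻¹ = (1/det(κ ⋄_P κ)) · (κ ⋄_P̃ κ). -/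
open scoped BigOperators Matrix ComplexOrder
open MeasureTheory Filter Matrix

noncomputable section

lemma adj2_eq (X : Matrix (Fin 2) (Fin 2) ℝ) : X.adjugate = X.trace • (1 : Matrix (Fin 2) (Fin 2) ℝ) - X := by
  rw [Matrix.adjugate_fin_two]
  ext i j
  fin_cases i <;> fin_cases j <;>
    simp [Matrix.trace_fin_two, Matrix.one_apply] <;> ring

lemma adjMC (z : ℂ) : (MC z).adjugate = (MC z)ᵀ := by
  rw [Matrix.adjugate_fin_two]
  ext i j
  fin_cases i <;> fin_cases j <;> simp [MC]

/-- with `P = R diag(λ₁,λ₂) Rᵀ` (`R` a rotation, `λ₁ ≥ λ₂ > 0`) and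
`P̃ = R diag(λ₂,λ₁) Rᵀ`, one has `(κ ⋄_P κ)⁻¹ = (1/det(κ ⋄_P κ)) (κ ⋄_P̃ κ)`. -/
theorem dia_inverse_formula {N : ℕ}
    (P Pt R : Matrix (Fin 2) (Fin 2) ℝ) (l1 l2 : ℝ)
    (hR : R * Rᵀ = 1) (hRdet : R.det = 1)
    (hPspec : P = R * Matrix.diagonal ![l1, l2] * Rᵀ)
    (hPtspec : Pt = R * Matrix.diagonal ![l2, l1] * Rᵀ)
    (hl2 : 0 < l2) (hl12 : l2 ≤ l1)
    (κ : CVec N) (hκ : ‖κ‖ = 1) :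
    (diaA P κ κ)⁻¹ = (1 / (diaA P κ κ).det) • diaA Pt κ κ := by
  have hRt : Rᵀ * R = 1 := by
    have := mul_eq_one_comm.mp hR
    exact this
  have hadjR : R.adjugate = Rᵀ := by
    have h1 : R⁻¹ = Rᵀ := Matrix.inv_eq_right_inv hR
    have h2 : R⁻¹ = Ring.inverse R.det • R.adjugate := Matrix.inv_def R
    rw [hRdet] at h2
    simpa using h2.symm.trans h1
  have hadjRt : (Rᵀ).adjugate = R := by
    rw [← Matrix.adjugate_transpose, hadjR, Matrix.transpose_transpose]
  have hadjD : (Matrix.diagonal ![l1, l2]).adjugate = Matrix.diagonal ![l2, l1] := by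
    rw [Matrix.adjugate_fin_two]
    ext i j
    fin_cases i <;> fin_cases j <;> simp [Matrix.diagonal]
  have hadjP : P.adjugate = Pt := by
    rw [hPspec, hPtspec, Matrix.adjugate_mul_distrib, Matrix.adjugate_mul_distrib,
      hadjR, hadjRt, hadjD]
    noncomm_ring
  have hkey : ∀ z : ℂ, ((MC z)ᵀ * P * MC z).adjugate = (MC z)ᵀ * Pt * MC z := by
    intro z
    rw [Matrix.adjugate_mul_distrib, Matrix.adjugate_mul_distrib, adjMC,
      ← Matrix.adjugate_transpose, adjMC, Matrix.transpose_transpose, hadjP]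
    noncomm_ring
  have hadj : (diaA P κ κ).adjugate = diaA Pt κ κ := by
    unfold diaA
    rw [adj2_eq, Matrix.trace_sum, Finset.sum_smul, ← Finset.sum_sub_distrib]
    refine Finset.sum_congr rfl fun ν _ => ?_
    rw [← adj2_eq, hkey]
  rw [Matrix.inv_def, Ring.inverse_eq_inv', hadj, one_div]
end
end

section
/- Let P be a 2×2 real symmetric positive definite matrix with eigenvalues λ₁ ≥ λ₂ > 0. Then for every unit vector κ ∈ S_ℂ in ℂ^N, det(κ ⋄_P κ) ≥ λ₁λ₂. In particular κ ⋄_P κ is invertible. -/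
open scoped BigOperators Matrix ComplexOrder
open MeasureTheory Filter Matrix

noncomputable section

/-- `det(κ ⋄_P κ) ≥ λ₁λ₂` for every unit vector `κ`; in particular `κ ⋄_P κ`
is invertible. -/
theorem dia_det_lower_bound {N : ℕ}
    (P R : Matrix (Fin 2) (Fin 2) ℝ) (l1 l2 : ℝ)
    (hR : R * Rᵀ = 1) (hPspec : P = R * Matrix.diagonal ![l1, l2] * Rᵀ)
    (hl2 : 0 < l2) (hl12 : l2 ≤ l1)
    (κ : CVec N) (hκ : ‖κ‖ = 1) :
    l1 * l2 ≤ (diaA P κ κ).det ∧ IsUnit (diaA P κ κ) := by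
  have hR' : Rᵀ * R = 1 := mul_eq_one_comm.mp hR
  set u := R 0 0 with hu
  set v := R 0 1 with hv
  set s := R 1 0 with hs
  set t := R 1 1 with ht
  -- row relations from R * Rᵀ = 1
  have e1 : u * u + v * v = 1 := by
    have := congrFun (congrFun hR 0) 0
    simpa [Matrix.mul_apply, Fin.sum_univ_two] using this
  have e2 : u * s + v * t = 0 := by
    have h := congrFun (congrFun hR 1) 0
    simp [Matrix.mul_apply, Fin.sum_univ_two] at h
    linear_combination h
  have e3 : s * s + t * t = 1 := by
    have := congrFun (congrFun hR 1) 1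
    simpa [Matrix.mul_apply, Fin.sum_univ_two] using this
  -- column relation from Rᵀ * R = 1
  have c1 : u * u + s * s = 1 := by
    have := congrFun (congrFun hR' 0) 0
    simpa [Matrix.mul_apply, Fin.sum_univ_two] using this
  -- entries of P
  have hp00 : P 0 0 = l2 + (l1 - l2) * u ^ 2 := by
    have h : P 0 0 = l1 * (u * u) + l2 * (v * v) := by
      rw [hPspec]; simp [Matrix.mul_apply, Fin.sum_univ_two, Matrix.diagonal]; ring
    rw [h]; linear_combination l2 * e1
  have hp01 : P 0 1 = (l1 - l2) * (u * s) := by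
    have h : P 0 1 = l1 * (u * s) + l2 * (v * t) := by
      rw [hPspec]; simp [Matrix.mul_apply, Fin.sum_univ_two, Matrix.diagonal]; ring
    rw [h]; linear_combination l2 * e2
  have hp10 : P 1 0 = (l1 - l2) * (u * s) := by
    have h : P 1 0 = l1 * (u * s) + l2 * (v * t) := by
      rw [hPspec]; simp [Matrix.mul_apply, Fin.sum_univ_two, Matrix.diagonal]; ring
    rw [h]; linear_combination l2 * e2
  have hp11 : P 1 1 = l2 + (l1 - l2) * s ^ 2 := by
    have h : P 1 1 = l1 * (s * s) + l2 * (t * t) := by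
      rw [hPspec]; simp [Matrix.mul_apply, Fin.sum_univ_two, Matrix.diagonal]; ring
    rw [h]; linear_combination l2 * e3
  set F : Fin N → ℝ := fun ν => u * (κ ν).re + s * (κ ν).im with hF
  set G : Fin N → ℝ := fun ν => s * (κ ν).re - u * (κ ν).im with hG
  -- the norm condition
  have hnorm : ∑ ν, ((κ ν).re ^ 2 + (κ ν).im ^ 2) = 1 := by
    have h2 : ‖κ‖ ^ 2 = ∑ ν, ‖κ ν‖ ^ 2 := by
      rw [EuclideanSpace.norm_eq]
      rw [Real.sq_sqrt (by positivity)]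
    have h3 : ∀ ν : Fin N, ‖κ ν‖ ^ 2 = (κ ν).re ^ 2 + (κ ν).im ^ 2 := by
      intro ν
      rw [Complex.sq_norm, Complex.normSq_apply]; ring
    rw [hκ] at h2
    rw [← Finset.sum_congr rfl fun ν _ => h3 ν]
    linarith [h2]
  have hS : ∀ i j, diaA P κ κ i j = ∑ ν, ((MC (κ ν))ᵀ * P * MC (κ ν)) i j := fun i j => by
    simp [diaA, Matrix.sum_apply]
  have hS00 : diaA P κ κ 0 0 = l2 + (l1 - l2) * ∑ ν, F ν ^ 2 := by
    rw [hS]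
    have : ∀ ν : Fin N, ((MC (κ ν))ᵀ * P * MC (κ ν)) 0 0
        = l2 * ((κ ν).re ^ 2 + (κ ν).im ^ 2) + (l1 - l2) * F ν ^ 2 := by
      intro ν
      simp [MC, Matrix.mul_apply, Matrix.transpose_apply, Matrix.vecHead, Matrix.vecTail, Fin.sum_univ_two, hp00, hp01, hp10, hp11, hF]
      ring
    rw [Finset.sum_congr rfl fun ν _ => this ν, Finset.sum_add_distrib,
      ← Finset.mul_sum, ← Finset.mul_sum, hnorm, mul_one]
  have hS11 : diaA P κ κ 1 1 = l2 + (l1 - l2) * ∑ ν, G ν ^ 2 := by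
    rw [hS]
    have : ∀ ν : Fin N, ((MC (κ ν))ᵀ * P * MC (κ ν)) 1 1
        = l2 * ((κ ν).re ^ 2 + (κ ν).im ^ 2) + (l1 - l2) * G ν ^ 2 := by
      intro ν
      simp [MC, Matrix.mul_apply, Matrix.transpose_apply, Matrix.vecHead, Matrix.vecTail, Fin.sum_univ_two, hp00, hp01, hp10, hp11, hG]
      ring
    rw [Finset.sum_congr rfl fun ν _ => this ν, Finset.sum_add_distrib,
      ← Finset.mul_sum, ← Finset.mul_sum, hnorm, mul_one]
  have hS01 : diaA P κ κ 0 1 = (l1 - l2) * ∑ ν, F ν * G ν := by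
    rw [hS]
    have : ∀ ν : Fin N, ((MC (κ ν))ᵀ * P * MC (κ ν)) 0 1
        = (l1 - l2) * (F ν * G ν) := by
      intro ν
      simp [MC, Matrix.mul_apply, Matrix.transpose_apply, Matrix.vecHead, Matrix.vecTail, Fin.sum_univ_two, hp00, hp01, hp10, hp11, hF, hG]
      ring
    rw [Finset.sum_congr rfl fun ν _ => this ν, ← Finset.mul_sum]
  have hS10 : diaA P κ κ 1 0 = (l1 - l2) * ∑ ν, F ν * G ν := by
    rw [hS]
    have : ∀ ν : Fin N, ((MC (κ ν))ᵀ * P * MC (κ ν)) 1 0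
        = (l1 - l2) * (F ν * G ν) := by
      intro ν
      simp [MC, Matrix.mul_apply, Matrix.transpose_apply, Matrix.vecHead, Matrix.vecTail, Fin.sum_univ_two, hp00, hp01, hp10, hp11, hF, hG]
      ring
    rw [Finset.sum_congr rfl fun ν _ => this ν, ← Finset.mul_sum]
  set a := ∑ ν, F ν ^ 2 with ha
  set c := ∑ ν, G ν ^ 2 with hc
  set bb := ∑ ν, F ν * G ν with hbb
  have hac : a + c = 1 := by
    rw [ha, hc, ← Finset.sum_add_distrib]
    have : ∀ ν : Fin N, F ν ^ 2 + G ν ^ 2 = (κ ν).re ^ 2 + (κ ν).im ^ 2 := by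
      intro ν
      simp only [hF, hG]
      linear_combination ((κ ν).re ^ 2 + (κ ν).im ^ 2) * c1
    rw [Finset.sum_congr rfl fun ν _ => this ν, hnorm]
  have cs : bb ^ 2 ≤ a * c := Finset.sum_mul_sq_le_sq_mul_sq _ F G
  have hdet : (diaA P κ κ).det
      = (l2 + (l1 - l2) * a) * (l2 + (l1 - l2) * c) - ((l1 - l2) * bb) * ((l1 - l2) * bb) := by
    rw [Matrix.det_fin_two, hS00, hS11, hS01, hS10]
  have hge : l1 * l2 ≤ (diaA P κ κ).det := by
    rw [hdet]
    have h0 : 0 ≤ (l1 - l2) ^ 2 * (a * c - bb ^ 2) :=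
      mul_nonneg (sq_nonneg _) (by linarith)
    have hid : (l2 + (l1 - l2) * a) * (l2 + (l1 - l2) * c) - ((l1 - l2) * bb) * ((l1 - l2) * bb)
        - l1 * l2 = (l1 - l2) ^ 2 * (a * c - bb ^ 2) := by
      linear_combination (l2 * (l1 - l2)) * hac
    linarith [h0, hid]
  refine ⟨hge, ?_⟩
  rw [Matrix.isUnit_iff_isUnit_det, isUnit_iff_ne_zero]
  have : 0 < l1 * l2 := mul_pos (lt_of_lt_of_le hl2 hl12) hl2
  intro h
  rw [h] at hge
  linarith
end
end

section
/- Let P be a 2×2 real symmetric positive definite matrix with eigenvalues λ₁ ≥ λ₂ > 0. Then for every unit vector κ ∈ S_ℂ in ℂ^N, the Frobenius norm of κ ⋄_P κ satisfies ‖κ ⋄_P κ‖_F ≤ √(λ₁² + λ₂²). -/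
open scoped BigOperators Matrix ComplexOrder
open MeasureTheory Filter Matrix

noncomputable section

attribute [local instance] Matrix.frobeniusSeminormedAddCommGroup

lemma frob_eq_norm (A : Matrix (Fin 2) (Fin 2) ℝ) : frob A = ‖A‖ := by
  simp only [frob, Matrix.frobenius_norm_def, Real.sqrt_eq_rpow]
  norm_num

lemma sumsq_conj (z : ℂ) (P : Matrix (Fin 2) (Fin 2) ℝ) :
    (∑ i, ∑ j, (((!![z.re, -z.im; z.im, z.re])ᵀ * P * !![z.re, -z.im; z.im, z.re]) i j) ^ 2)
      = (z.re^2+z.im^2)^2 * (∑ i, ∑ j, P i j ^ 2) := by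
  rw [show (!![z.re, -z.im; z.im, z.re])ᵀ = !![z.re, z.im; -z.im, z.re] by
    ext i j; fin_cases i <;> fin_cases j <;> simp]
  simp [Fin.sum_univ_two, Matrix.mul_apply, Matrix.vecMul, dotProduct]
  ring

lemma sumsq_P (R : Matrix (Fin 2) (Fin 2) ℝ) (l1 l2 : ℝ) (hR : R * Rᵀ = 1) :
    (∑ i, ∑ j, ((R * Matrix.diagonal ![l1, l2] * Rᵀ) i j) ^ 2) = l1 ^ 2 + l2 ^ 2 := by
  have hR' : Rᵀ * R = 1 := mul_eq_one_comm.mp hR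
  have h1 := congrFun (congrFun hR' 0) 0
  have h2 := congrFun (congrFun hR' 1) 1
  have h3 := congrFun (congrFun hR' 0) 1
  simp [Matrix.mul_apply, Fin.sum_univ_two, Matrix.one_apply] at h1 h2 h3
  simp [Fin.sum_univ_two, Matrix.mul_apply, Matrix.diagonal, Matrix.transpose_apply]
  linear_combination (l1^2*(R 0 0^2 + R 1 0^2 + 1)) * h1 + (l2^2*(R 0 1^2 + R 1 1^2 + 1)) * h2
    + (2*l1*l2*(R 0 0*R 0 1 + R 1 0*R 1 1)) * h3

/-- Frobenius norm bound `‖κ ⋄_P κ‖_F ≤ √(λ₁² + λ₂²)` for unit `κ`. -/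
theorem dia_frobenius_bound {N : ℕ}
    (P R : Matrix (Fin 2) (Fin 2) ℝ) (l1 l2 : ℝ)
    (hR : R * Rᵀ = 1) (hPspec : P = R * Matrix.diagonal ![l1, l2] * Rᵀ)
    (hl2 : 0 < l2) (hl12 : l2 ≤ l1)
    (κ : CVec N) (hκ : ‖κ‖ = 1) :
    frob (diaA P κ κ) ≤ Real.sqrt (l1 ^ 2 + l2 ^ 2) := by
  subst hPspec
  set D := Matrix.diagonal ![l1, l2] with hD
  have hsum : ∑ ν, ((κ ν).re ^ 2 + (κ ν).im ^ 2) = 1 := by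
    have h := EuclideanSpace.norm_eq κ
    rw [hκ] at h
    have h2 : ∑ i, ‖κ i‖ ^ 2 = 1 := Real.sqrt_eq_one.mp h.symm
    refine Eq.trans ?_ h2
    refine Finset.sum_congr rfl fun i _ => ?_
    rw [Complex.sq_norm, Complex.normSq_apply]
    ring
  rw [frob_eq_norm, diaA]
  calc ‖∑ ν, (MC (κ ν))ᵀ * (R * D * Rᵀ) * MC (κ ν)‖
      ≤ ∑ ν, ‖(MC (κ ν))ᵀ * (R * D * Rᵀ) * MC (κ ν)‖ := norm_sum_le _ _
    _ = ∑ ν, ((κ ν).re ^ 2 + (κ ν).im ^ 2) * Real.sqrt (l1 ^ 2 + l2 ^ 2) := by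
        refine Finset.sum_congr rfl fun ν _ => ?_
        rw [← frob_eq_norm, frob, MC, sumsq_conj, sumsq_P R l1 l2 hR,
          Real.sqrt_mul (sq_nonneg _), Real.sqrt_sq (by positivity)]
    _ = Real.sqrt (l1 ^ 2 + l2 ^ 2) := by rw [← Finset.sum_mul, hsum, one_mul]
end
end
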